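/- arXiv:1708.06691 — 4 statements merged into one kernel-verified Lean document; each statement's English description precedes it below -/
import Mathlib

section
/- If P is an optimal k-pack of an in-semicomplete digraph D, then there exists a coloring of D orthogonal to P (i.e., the Aharoni-Hartman-Hoffman Conjecture holds for in-semicomplete digraphs). -/
/-!
If a vertex is left uncovered, the optimal pack consists of exactly `k` paths, and no uncovered
vertex has an arc into a path of the pack. Give the uncovered vertices a Gallai–Roy labelling `f`:
an uncovered path with `f u` vertices starts at `u`, and adjacent vertices get different labels;
optimality bounds every label by the length of every path. The class of label `j` gathers the
uncovered vertices of label `j` and the `j`-th last vertex of every path, so it meets all `k`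
paths. It is stable: an arc from a `j`-th last vertex to an uncovered vertex of label `j`, or
between the `j`-th last vertices of two paths, would yield a heavier `k`-pack. The remaining,
covered, vertices form singleton classes.
-/

open scoped Classical

namespace DigraphPaper

variable {V : Type*} [Fintype V] [DecidableEq V]

/-- Vertices `u` and `v` are adjacent in the digraph with arc relation `A`. -/
def DAdj (A : V → V → Prop) (u v : V) : Prop := A u v ∨ A v u

/-- A set of vertices is stable if its vertices are pairwise nonadjacent. -/
def DStable (A : V → V → Prop) (S : Set V) : Prop :=
  ∀ u ∈ S, ∀ v ∈ S, u ≠ v → ¬ DAdj A u v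

/-- The in-neighborhood of every vertex induces a semicomplete digraph. -/
def InSemicomplete (A : V → V → Prop) : Prop :=
  ∀ v u w : V, A u v → A w v → u ≠ w → DAdj A u w

/-- The out-neighborhood of every vertex induces a semicomplete digraph. -/
def OutSemicomplete (A : V → V → Prop) : Prop :=
  ∀ v u w : V, A v u → A v w → u ≠ w → DAdj A u w

/-- A path: a nonempty list of distinct vertices with consecutive arcs. -/
def IsPath (A : V → V → Prop) (p : List V) : Prop :=
  p ≠ [] ∧ p.Nodup ∧ p.Chain' A

/-- A collection of pairwise vertex-disjoint lists. -/
def PDisjoint (P : Finset (List V)) : Prop :=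
  ∀ p ∈ P, ∀ q ∈ P, p ≠ q → ∀ x : V, x ∈ p → x ∉ q

/-- A path partition: vertex-disjoint paths covering all vertices. -/
def IsPathPartition (A : V → V → Prop) (P : Finset (List V)) : Prop :=
  (∀ p ∈ P, IsPath A p) ∧ PDisjoint P ∧ ∀ v : V, ∃ p ∈ P, v ∈ p

/-- The k-norm of a collection of paths. -/
def knorm (k : ℕ) (P : Finset (List V)) : ℕ := ∑ p ∈ P, min p.length k

/-- The set of final vertices of the paths in `P`. -/
def pends (P : Finset (List V)) : Set V := {x | ∃ p ∈ P, p.getLast? = some x}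

/-- A partial k-coloring: k pairwise disjoint stable sets. -/
def IsPartialKColoring (A : V → V → Prop) (k : ℕ) (C : Fin k → Finset V) : Prop :=
  (∀ i, DStable A (C i : Set V)) ∧ ∀ i j, i ≠ j → Disjoint (C i) (C j)

/-- Orthogonality of a partial k-coloring to a path partition:
each path meets `min |P| k` distinct color classes. -/
def OrthoPC (k : ℕ) (C : Fin k → Finset V) (P : Finset (List V)) : Prop :=
  ∀ p ∈ P, min p.length k ≤ (Finset.univ.filter fun i : Fin k => ∃ x ∈ p, x ∈ C i).card

/-- A k-optimal path partition. -/
def KOptimal (A : V → V → Prop) (k : ℕ) (P : Finset (List V)) : Prop :=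
  IsPathPartition A P ∧
    ∀ Q : Finset (List V), IsPathPartition A Q → knorm k P ≤ knorm k Q

/-- A k-pack: at most k vertex-disjoint paths. -/
def IsKPack (A : V → V → Prop) (k : ℕ) (P : Finset (List V)) : Prop :=
  P.card ≤ k ∧ (∀ p ∈ P, IsPath A p) ∧ PDisjoint P

/-- Weight of a k-pack: number of covered vertices. -/
def weight (P : Finset (List V)) : ℕ := ∑ p ∈ P, p.length

/-- The set of vertices covered by the paths of `P`. -/
def cover (P : Finset (List V)) : Finset V := P.biUnion List.toFinset

/-- An optimal k-pack. -/
def OptimalKPack (A : V → V → Prop) (k : ℕ) (P : Finset (List V)) : Prop :=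
  IsKPack A k P ∧ ∀ Q : Finset (List V), IsKPack A k Q → weight Q ≤ weight P

/-- A coloring: a partition of the vertex set into stable sets. -/
def IsColoring (A : V → V → Prop) (C : Finset (Finset V)) : Prop :=
  (∀ c ∈ C, DStable A (c : Set V)) ∧ (∀ c ∈ C, c.Nonempty) ∧
  (∀ c ∈ C, ∀ c' ∈ C, c ≠ c' → Disjoint c c') ∧ ∀ v : V, ∃ c ∈ C, v ∈ c

/-- Orthogonality of a coloring to a k-pack:
each color class meets `min |C| k` distinct paths. -/
def OrthoCP (k : ℕ) (C : Finset (Finset V)) (P : Finset (List V)) : Prop :=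
  ∀ c ∈ C, min c.card k ≤ (P.filter fun p => ∃ x ∈ c, x ∈ p).card

/-- π_k(D): minimum k-norm of a path partition. -/
noncomputable def pik (A : V → V → Prop) (k : ℕ) : ℕ :=
  sInf {n | ∃ P : Finset (List V), IsPathPartition A P ∧ knorm k P = n}

/-- α_k(D): maximum weight of a partial k-coloring. -/
noncomputable def alphak (A : V → V → Prop) (k : ℕ) : ℕ :=
  sSup {n | ∃ C : Fin k → Finset V, IsPartialKColoring A k C ∧ ∑ i, (C i).card = n}

/-- π(D): minimum number of paths in a path partition. -/
noncomputable def piNum (A : V → V → Prop) : ℕ :=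
  sInf {n | ∃ P : Finset (List V), IsPathPartition A P ∧ P.card = n}

/-- α(D): maximum size of a stable set. -/
noncomputable def alphaNum (A : V → V → Prop) : ℕ :=
  sSup {n | ∃ S : Finset V, DStable A (S : Set V) ∧ S.card = n}

/-- k-norm of a coloring. -/
def cnorm (k : ℕ) (C : Finset (Finset V)) : ℕ := ∑ c ∈ C, min c.card k

/-- χ_k(D): minimum k-norm of a coloring. -/
noncomputable def chik (A : V → V → Prop) (k : ℕ) : ℕ :=
  sInf {n | ∃ C : Finset (Finset V), IsColoring A C ∧ cnorm k C = n}

/-- λ_k(D): maximum weight of a k-pack. -/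
noncomputable def lamk (A : V → V → Prop) (k : ℕ) : ℕ :=
  sSup {n | ∃ P : Finset (List V), IsKPack A k P ∧ weight P = n}

end DigraphPaper

namespace DigraphPaper

section Exchange

variable {V : Type*} [DecidableEq V] {A : V → V → Prop} {k : ℕ} {P : Finset (List V)}

lemma mem_cover {x : V} : x ∈ cover P ↔ ∃ p ∈ P, x ∈ p := by
  simp [cover]

lemma PDisjoint.union {N : Finset (List V)} (hP : PDisjoint P) (hN : PDisjoint N)
    (hPN : ∀ p ∈ P, ∀ z ∈ N, ∀ x ∈ z, x ∉ p) : PDisjoint (P ∪ N) := by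
  intro p hp q hq hpq x hxp hxq
  rcases Finset.mem_union.1 hp with hp | hp <;> rcases Finset.mem_union.1 hq with hq | hq
  exacts [hP p hp q hq hpq x hxp hxq, hPN p hp q hq x hxq hxp,
    hPN q hq p hp x hxp hxq, hN p hp q hq hpq x hxp hxq]

lemma OptimalKPack.weight_le_of_exchange (hP : OptimalKPack A k P) {Q N : Finset (List V)}
    (hQ : Q ⊆ P) (hNpath : ∀ z ∈ N, IsPath A z) (hN : PDisjoint N)
    (hsep : ∀ p ∈ P \ Q, ∀ z ∈ N, ∀ x ∈ z, x ∉ p) (hcard : (P \ Q).card + N.card ≤ k) :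
    weight N ≤ weight Q := by
  obtain ⟨⟨-, hPpath, hPdisj⟩, hopt⟩ := hP
  have hdisj : Disjoint (P \ Q) N := Finset.disjoint_left.2 fun z hzP hzN =>
    hsep z hzP z hzN _ (List.head_mem (hNpath z hzN).1) (List.head_mem (hNpath z hzN).1)
  have hpack : IsKPack A k (P \ Q ∪ N) := by
    refine ⟨(Finset.card_union_le _ _).trans hcard, fun z hz => ?_, ?_⟩
    · rcases Finset.mem_union.1 hz with hz | hz
      exacts [hPpath z (Finset.sdiff_subset hz), hNpath z hz]
    · exact PDisjoint.union (fun p hp q hq => hPdisj p (Finset.sdiff_subset hp) q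
        (Finset.sdiff_subset hq)) hN hsep
  have hle := hopt _ hpack
  have hsplit : weight (P \ Q) + weight Q = weight P := Finset.sum_sdiff hQ
  unfold weight at hle hsplit ⊢
  rw [Finset.sum_union hdisj] at hle
  omega

lemma OptimalKPack.card_eq_of_notMem_cover (hP : OptimalKPack A k P) {r : V}
    (hr : r ∉ cover P) : P.card = k := by
  refine le_antisymm hP.1.1 (not_lt.1 fun hlt => ?_)
  have := hP.weight_le_of_exchange (Q := ∅) (N := {[r]}) (Finset.empty_subset _)
    (by simpa using ⟨by simp, by simp, List.isChain_singleton r⟩) (by simp [PDisjoint])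
    (fun p hp z hz x hx hxp => by
      simp only [Finset.mem_singleton] at hz; subst hz
      exact hr (mem_cover.2 ⟨p, Finset.sdiff_subset hp, List.mem_singleton.1 hx ▸ hxp⟩))
    (by simpa using hlt)
  simp [weight] at this

lemma OptimalKPack.length_le_of_subset (hP : OptimalKPack A k P) {p z : List V} (hp : p ∈ P)
    (hz : IsPath A z) (hzp : ∀ x ∈ z, x ∈ p ∨ x ∉ cover P) : z.length ≤ p.length := by
  have := hP.weight_le_of_exchange (Q := {p}) (N := {z}) (by simpa using hp)
    (by simpa using hz) (by simp [PDisjoint])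
    (fun w hw z' hz' x hx hxw => by
      simp only [Finset.mem_singleton] at hz'; subst hz'
      obtain ⟨hwP, hwp⟩ := Finset.mem_sdiff.1 hw
      rcases hzp x hx with hxp | hxc
      · exact hP.1.2.2 p hp w hwP (fun h => hwp (by simp [h])) x hxp hxw
      · exact hxc (mem_cover.2 ⟨w, hwP, hxw⟩))
    (by rw [Finset.card_sdiff_of_subset (by simpa using hp)]; simpa using
      (Nat.sub_add_cancel (Finset.card_pos.2 ⟨p, hp⟩)).le.trans hP.1.1)
  simpa [weight] using this

lemma OptimalKPack.length_add_length_le_of_subset (hP : OptimalKPack A k P)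
    {p q z₁ z₂ : List V} (hp : p ∈ P) (hq : q ∈ P) (hpq : p ≠ q) (hz₁ : IsPath A z₁)
    (hz₂ : IsPath A z₂) (hz₁₂ : ∀ x ∈ z₁, x ∉ z₂) (hz : ∀ x ∈ z₁ ++ z₂, x ∈ p ++ q ∨ x ∉ cover P) :
    z₁.length + z₂.length ≤ p.length + q.length := by
  have hne : z₁ ≠ z₂ := fun h => hz₁₂ _ (List.head_mem hz₁.1) (h ▸ List.head_mem hz₁.1)
  have hpqP : {p, q} ⊆ P := Finset.insert_subset hp (Finset.singleton_subset_iff.2 hq)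
  have := hP.weight_le_of_exchange (Q := {p, q}) (N := {z₁, z₂}) hpqP
    (by simp [hz₁, hz₂])
    (by
      simp only [PDisjoint, Finset.mem_insert, Finset.mem_singleton]
      rintro w (rfl | rfl) w' (rfl | rfl) hww' x hx hx'
      exacts [hww' rfl, hz₁₂ x hx hx', hz₁₂ x hx' hx, hww' rfl])
    (fun w hw z hz' x hx hxw => by
      obtain ⟨hwP, hwpq⟩ := Finset.mem_sdiff.1 hw
      simp only [Finset.mem_insert, Finset.mem_singleton, not_or] at hwpq
      have hx' : x ∈ z₁ ++ z₂ := by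
        simp only [Finset.mem_insert, Finset.mem_singleton] at hz'
        rcases hz' with rfl | rfl <;> simp [hx]
      rcases hz x hx' with hxpq | hxc
      · rcases List.mem_append.1 hxpq with hxp | hxq
        exacts [hP.1.2.2 p hp w hwP (Ne.symm hwpq.1) x hxp hxw,
          hP.1.2.2 q hq w hwP (Ne.symm hwpq.2) x hxq hxw]
      · exact hxc (mem_cover.2 ⟨w, hwP, hxw⟩))
    (by
      rw [Finset.card_sdiff_of_subset hpqP, Finset.card_pair hpq, Finset.card_pair hne]
      have := Finset.card_le_card hpqP
      rw [Finset.card_pair hpq] at this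
      have := hP.1.1
      omega)
  simpa [weight, Finset.sum_pair hpq, Finset.sum_pair hne] using this

end Exchange

section Paths

variable {V : Type*} {A : V → V → Prop}

lemma IsPath.isChain {p : List V} (hp : IsPath A p) : List.IsChain A p := hp.2.2

lemma isChain_append_singleton_of_rel {l : List V} {a b : V} (hl : List.IsChain A (l ++ [a]))
    (hab : A a b) : List.IsChain A (l ++ [a] ++ [b]) :=
  hl.append (List.isChain_singleton b) (by simpa using hab)

/-- The arcs into `b` from `a` and from the predecessor `c` of `b` force an arc between `a` and
`c`; recursively merge the paths ending in `a` and `c`, then append `b`. -/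
theorem exists_isChain_perm_of_arc (hin : InSemicomplete A) (p q : List V) (a b : V)
    (hp : List.IsChain A (p ++ [a])) (hq : List.IsChain A (q ++ [b]))
    (hnd : (p ++ [a] ++ (q ++ [b])).Nodup) (hab : A a b) :
    ∃ z, List.IsChain A (z ++ [b]) ∧ (z ++ [b]).Perm (p ++ [a] ++ (q ++ [b])) := by
  rcases q.eq_nil_or_concat' with rfl | ⟨q, c, rfl⟩
  · exact ⟨p ++ [a], isChain_append_singleton_of_rel hp hab, by simp⟩
  have hq' := List.isChain_append.1 hq
  have hcb : A c b := by simpa using hq'.2.2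
  have hac : a ≠ c := (List.nodup_append.1 hnd).2.2 a (by simp) c (by simp)
  rcases hin b a c hab hcb hac with hac | hca
  · obtain ⟨z, hz, hperm⟩ := exists_isChain_perm_of_arc hin p q a c hp hq'.1
      (hnd.sublist (by simp)) hac
    refine ⟨z ++ [c], isChain_append_singleton_of_rel hz hcb, ?_⟩
    simpa using hperm.append_right [b]
  · obtain ⟨z, hz, hperm⟩ := exists_isChain_perm_of_arc hin q p c a hq'.1 hp
      (List.perm_append_comm.nodup_iff.1 (hnd.sublist (by simp))) hca
    refine ⟨z ++ [a], isChain_append_singleton_of_rel hz hab, ?_⟩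
    have := (hperm.trans List.perm_append_comm).append_right [b]
    simpa using this
termination_by p.length + q.length

end Paths

section NthLast

variable {V : Type*} {p : List V} {j j' : ℕ} {x y : V}

/-- `x` is the `j`-th vertex of `p` counted from the end, starting at `j = 1` for the last one. -/
def IsNthLast (p : List V) (j : ℕ) (x : V) : Prop :=
  ∃ s t, p = s ++ x :: t ∧ t.length + 1 = j

lemma IsNthLast.mem (hx : IsNthLast p j x) : x ∈ p := by
  obtain ⟨s, t, rfl, -⟩ := hx
  simp

lemma exists_isNthLast (hj : 1 ≤ j) (hjp : j ≤ p.length) : ∃ x, IsNthLast p j x := by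
  have hi : p.length - j < p.length := by omega
  refine ⟨p[p.length - j], p.take (p.length - j), p.drop (p.length - j + 1), ?_, ?_⟩
  · rw [← List.drop_eq_getElem_cons hi, List.take_append_drop]
  · simp
    omega

lemma IsNthLast.unique (hx : IsNthLast p j x) (hy : IsNthLast p j y) : x = y := by
  obtain ⟨s, t, rfl, ht⟩ := hx
  obtain ⟨s', t', he, ht'⟩ := hy
  have := (List.append_inj' he (by simp; omega)).2
  exact (List.cons_eq_cons.1 this).1

lemma IsNthLast.eq_of_nodup [DecidableEq V] (hp : p.Nodup) (hx : IsNthLast p j x)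
    (hx' : IsNthLast p j' x) : j = j' := by
  obtain ⟨s, t, rfl, rfl⟩ := hx
  obtain ⟨s', t', he, rfl⟩ := hx'
  have hs : x ∉ s := fun h => (List.nodup_append.1 hp).2.2 x h x (by simp) rfl
  rw [he] at hp
  have hs' : x ∉ s' := fun h => (List.nodup_append.1 hp).2.2 x h x (by simp) rfl
  have hidx := congrArg (List.idxOf x) he
  simp only [List.idxOf_append_of_notMem hs, List.idxOf_append_of_notMem hs',
    List.idxOf_cons_self] at hidx
  have := congrArg List.length he
  simp at this
  omega

end NthLast

section InSemicomplete

variable {V : Type*} [DecidableEq V] {A : V → V → Prop} {k : ℕ} {P : Finset (List V)}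

lemma OptimalKPack.not_isChain_insert (hP : OptimalKPack A k P) {s t : List V}
    (hp : s ++ t ∈ P) {r : V} (hr : r ∉ cover P) : ¬ List.IsChain A (s ++ r :: t) := by
  intro hchain
  have hrp : r ∉ s ++ t := fun h => hr (mem_cover.2 ⟨_, hp, h⟩)
  have hz : IsPath A (s ++ r :: t) :=
    ⟨by simp, List.nodup_middle.2 (List.nodup_cons.2 ⟨hrp, (hP.1.2.1 _ hp).2.1⟩), hchain⟩
  have := hP.length_le_of_subset hp hz fun x hx => by
    rcases List.mem_cons.1 (List.perm_middle.subset hx) with rfl | hx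
    exacts [Or.inr hr, Or.inl hx]
  simp at this

/-- If `r → x` and `y` precedes `x`, then either `y → r` and `r` can be inserted between them, or
`r → y` by in-semicompleteness at `x`, and we move back along the path. -/
lemma OptimalKPack.not_arc_of_notMem_cover (hP : OptimalKPack A k P) (hin : InSemicomplete A)
    {p : List V} (hp : p ∈ P) {r x : V} (hr : r ∉ cover P) (hx : x ∈ p) : ¬ A r x := by
  obtain ⟨s, t, rfl⟩ := List.append_of_mem hx
  have hchain := (hP.1.2.1 _ hp).isChain
  clear hx
  induction s using List.reverseRecOn generalizing x t with
  | nil =>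
    intro hrx
    exact hP.not_isChain_insert (s := []) hp hr (List.isChain_cons_cons.2 ⟨hrx, hchain⟩)
  | append_singleton s y ih =>
    intro hrx
    simp only [List.append_assoc, List.cons_append, List.nil_append] at hchain hp
    rw [List.isChain_append_cons_cons] at hchain
    have hyr : r ≠ y := fun h => hr (mem_cover.2 ⟨_, hp, by simp [h]⟩)
    rcases hin x r y hrx hchain.2.1 hyr with hry | hyr
    · exact ih (t := x :: t) hp (List.isChain_split.2 ⟨hchain.1, List.isChain_cons_cons.2
        ⟨hchain.2.1, hchain.2.2⟩⟩) hry
    · refine hP.not_isChain_insert (s := s ++ [y]) (t := x :: t) (by simpa using hp) hr ?_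
      simpa using ⟨hchain.1, hyr, hrx, hchain.2.2⟩

lemma OptimalKPack.length_le_of_arc_to_uncovered (hP : OptimalKPack A k P) {s t l : List V}
    {a : V} (hp : s ++ a :: t ∈ P) (hl : IsPath A l) (hlc : ∀ x ∈ l, x ∉ cover P)
    (ha : ∀ b ∈ l.head?, A a b) : l.length ≤ t.length := by
  have hpath := hP.1.2.1 _ hp
  have hcov : ∀ x ∈ s ++ a :: t, x ∈ cover P := fun x hx => mem_cover.2 ⟨_, hp, hx⟩
  have hz : IsPath A (s ++ a :: l) := by
    refine ⟨by simp, ?_, ?_⟩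
    · have hnd := hpath.2.1
      simp only [List.nodup_append, List.nodup_cons] at hnd ⊢
      refine ⟨hnd.1, ⟨fun ha' => hlc a ha' (hcov a (by simp)), hl.2.1⟩, ?_⟩
      intro x hx y hy hxy
      subst hxy
      rcases List.mem_cons.1 hy with rfl | hy
      · exact hnd.2.2 x hx x (by simp) rfl
      · exact hlc x hy (hcov x (by simp [hx]))
    · exact List.isChain_split.2 ⟨(List.isChain_split.1 hpath.isChain).1,
        List.isChain_cons.2 ⟨ha, hl.isChain⟩⟩
  have := hP.length_le_of_subset hp hz fun x hx => by
    simp only [List.mem_append, List.mem_cons] at hx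
    rcases hx with hx | rfl | hx
    exacts [Or.inl (by simp [hx]), Or.inl (by simp), Or.inr (hlc x hx)]
  simpa using this

/-- Otherwise the prefixes ending in `a` and `b` merge into one path ending in `b`, which continues
along `q`, while the uncovered path replaces the last `j` vertices of `p`: one vertex is gained. -/
lemma OptimalKPack.not_arc_of_isNthLast (hP : OptimalKPack A k P) (hin : InSemicomplete A)
    {p q l : List V} {j : ℕ} {a b : V} (hp : p ∈ P) (hq : q ∈ P) (hpq : p ≠ q)
    (ha : IsNthLast p j a) (hb : IsNthLast q j b) (hl : IsPath A l)
    (hlc : ∀ x ∈ l, x ∉ cover P) (hlj : l.length = j) : ¬ A a b := by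
  obtain ⟨p₁, p₂, rfl, hp₂⟩ := ha
  obtain ⟨q₁, q₂, rfl, hq₂⟩ := hb
  intro hab
  have hppath := hP.1.2.1 _ hp
  have hqpath := hP.1.2.1 _ hq
  have hnd : (p₁ ++ a :: p₂ ++ (q₁ ++ b :: q₂)).Nodup := List.nodup_append.2
    ⟨hppath.2.1, hqpath.2.1, fun x hx y hy hxy => hP.1.2.2 _ hp _ hq hpq x hx (hxy ▸ hy)⟩
  obtain ⟨z, hz, hperm⟩ := exists_isChain_perm_of_arc hin p₁ q₁ a b
    (List.isChain_split.1 hppath.isChain).1 (List.isChain_split.1 hqpath.isChain).1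
    (hnd.sublist (by simp)) hab
  have hmperm : (z ++ b :: q₂).Perm (p₁ ++ [a] ++ (q₁ ++ b :: q₂)) := by
    simpa using hperm.append_right q₂
  have hmpath : IsPath A (z ++ b :: q₂) := by
    refine ⟨by simp, hmperm.nodup_iff.2 (hnd.sublist (by simp)), ?_⟩
    show List.IsChain A _
    simpa using hz.append_overlap (List.isChain_split.1 hqpath.isChain).2 (by simp)
  have hmcov : ∀ x ∈ z ++ b :: q₂, x ∈ p₁ ++ a :: p₂ ++ (q₁ ++ b :: q₂) := fun x hx => by
    have := hmperm.subset hx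
    simp only [List.mem_append, List.mem_cons] at this ⊢
    tauto
  have hle := hP.length_add_length_le_of_subset hp hq hpq hmpath hl
    (fun x hx hxl => hlc x hxl (mem_cover.2 (by
      rcases List.mem_append.1 (hmcov x hx) with h | h
      exacts [⟨_, hp, h⟩, ⟨_, hq, h⟩])))
    (fun x hx => by
      rcases List.mem_append.1 hx with hx | hx
      exacts [Or.inl (hmcov x hx), Or.inr (hlc x hx)])
  have hlen := hmperm.length_eq
  simp only [List.length_append, List.length_cons] at hle hlen
  omega

end InSemicomplete

section GallaiRoy

variable {V : Type*} [Fintype V] {r : V → V → Prop} {a b u v : V}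

noncomputable def height (r : V → V → Prop) (u : V) : ℕ :=
  sSup {n | ∃ l, IsPath r l ∧ l.head? = some u ∧ l.length = n}

lemma bddAbove_lengths_isPath (r : V → V → Prop) (u : V) :
    BddAbove {n | ∃ l, IsPath r l ∧ l.head? = some u ∧ l.length = n} :=
  ⟨Fintype.card V, by rintro _ ⟨l, hl, -, rfl⟩; exact hl.2.1.length_le_card⟩

lemma exists_isPath_length_eq_height (r : V → V → Prop) (u : V) :
    ∃ l, IsPath r l ∧ l.head? = some u ∧ l.length = height r u :=
  Nat.sSup_mem (s := {n | ∃ l, IsPath r l ∧ l.head? = some u ∧ l.length = n})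
    ⟨1, [u], ⟨by simp, by simp, List.isChain_singleton u⟩, rfl, rfl⟩ (bddAbove_lengths_isPath r u)

lemma length_le_height {l : List V} (hl : IsPath r l) (hu : l.head? = some u) :
    l.length ≤ height r u :=
  le_csSup (bddAbove_lengths_isPath r u) ⟨l, hl, hu, rfl⟩

omit [Fintype V] in
lemma reflTransGen_of_mem_isChain {l : List V} {x : V} (hl : List.IsChain r l)
    (hu : l.head? = some u) (hx : x ∈ l) : Relation.ReflTransGen r u x := by
  refine hl.induction (Relation.ReflTransGen r u) l (fun _ _ h h' => h'.tail h) (fun hne => ?_) x hx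
  rw [List.head?_eq_some_head hne, Option.some_inj] at hu
  exact hu ▸ Relation.ReflTransGen.refl

lemma height_lt_of_rel (hr : ∀ x, ¬ Relation.TransGen r x x) (hab : r a b) :
    height r b < height r a := by
  obtain ⟨l, hl, hb, hlen⟩ := exists_isPath_length_eq_height r b
  have hal : a ∉ l := fun ha =>
    hr a (Relation.TransGen.head' hab (reflTransGen_of_mem_isChain hl.isChain hb ha))
  have hpath : IsPath r (a :: l) := by
    refine ⟨by simp, List.nodup_cons.2 ⟨hal, hl.2.1⟩, List.isChain_cons.2 ⟨?_, hl.isChain⟩⟩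
    simpa [hb] using hab
  have := length_le_height hpath rfl
  simp only [List.length_cons] at this
  omega

lemma height_lt_of_transGen (hr : ∀ x, ¬ Relation.TransGen r x x)
    (hab : Relation.TransGen r a b) : height r b < height r a := by
  induction hab with
  | single h => exact height_lt_of_rel hr h
  | tail _ h ih => exact (height_lt_of_rel hr h).trans ih

omit [Fintype V] in
lemma transGen_insert_or [DecidableEq V] {S : Finset (V × V)} {x y : V}
    (h : Relation.TransGen (fun a b => (a, b) ∈ insert (u, v) S) x y) :
    Relation.TransGen (fun a b => (a, b) ∈ S) x y ∨
      Relation.ReflTransGen (fun a b => (a, b) ∈ S) x u ∧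
        Relation.ReflTransGen (fun a b => (a, b) ∈ S) v y := by
  induction h with
  | single h =>
    rcases Finset.mem_insert.1 h with h | h
    · obtain ⟨rfl, rfl⟩ := Prod.mk.inj h
      exact Or.inr ⟨.refl, .refl⟩
    · exact Or.inl (.single h)
  | tail _ h ih =>
    rcases Finset.mem_insert.1 h with h | h
    · obtain ⟨rfl, rfl⟩ := Prod.mk.inj h
      exact Or.inr ⟨ih.elim (·.to_reflTransGen) (·.1), .refl⟩
    · exact ih.imp (·.tail h) fun ⟨h₁, h₂⟩ => ⟨h₁, h₂.tail h⟩

def IsPathLabelling (A : V → V → Prop) (R : Finset V) (f : V → ℕ) : Prop :=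
  (∀ u ∈ R, ∃ l, IsPath A l ∧ l.head? = some u ∧ (∀ x ∈ l, x ∈ R) ∧ l.length = f u) ∧
    ∀ u ∈ R, ∀ v ∈ R, u ≠ v → A u v → f u ≠ f v

/-- Gallai–Roy: take the heights for a maximal acyclic set of arcs of `A` on `R`; an arc left out
of it closes a cycle, so it increases the height. -/
theorem exists_isPathLabelling [DecidableEq V] (A : V → V → Prop) (R : Finset V) :
    ∃ f, IsPathLabelling A R f := by
  set E := Finset.univ.filter fun e : V × V => e.1 ∈ R ∧ e.2 ∈ R ∧ e.1 ≠ e.2 ∧ A e.1 e.2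
  set acyclic := fun S : Finset (V × V) => ∀ x, ¬ Relation.TransGen (fun a b => (a, b) ∈ S) x x
  obtain ⟨S, hS, hmax⟩ := Finset.exists_max_image (E.powerset.filter acyclic) Finset.card
    ⟨∅, Finset.mem_filter.2 ⟨Finset.empty_mem_powerset E, fun x h => by
      obtain ⟨_, h, -⟩ := Relation.TransGen.head'_iff.1 h
      simp at h⟩⟩
  rw [Finset.mem_filter, Finset.mem_powerset] at hS
  obtain ⟨hSE, hSacyc⟩ := hS
  have hSarc : ∀ {a b}, (a, b) ∈ S → b ∈ R ∧ A a b := fun h => by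
    have := hSE h
    simp only [E, Finset.mem_filter] at this
    exact ⟨this.2.2.1, this.2.2.2.2⟩
  refine ⟨height fun a b => (a, b) ∈ S, fun u hu => ?_, fun u hu v hv huv hA => ?_⟩
  · obtain ⟨l, hl, hh, hlen⟩ := exists_isPath_length_eq_height (fun a b => (a, b) ∈ S) u
    refine ⟨l, ⟨hl.1, hl.2.1, hl.isChain.imp fun _ _ h => (hSarc h).2⟩, hh, fun x hx => ?_, hlen⟩
    rcases (reflTransGen_of_mem_isChain hl.isChain hh hx).cases_tail with rfl | ⟨_, -, h⟩
    exacts [hu, (hSarc h).1]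
  by_cases huvS : (u, v) ∈ S
  · exact (height_lt_of_rel hSacyc huvS).ne'
  have hcyc : ¬ acyclic (insert (u, v) S) := fun hacyc => by
    have hE : (u, v) ∈ E := by simp [E, hu, hv, huv, hA]
    have := hmax _ (Finset.mem_filter.2 ⟨Finset.mem_powerset.2 (Finset.insert_subset hE hSE),
      hacyc⟩)
    rw [Finset.card_insert_of_notMem huvS] at this
    omega
  obtain ⟨x, hx⟩ := not_forall_not.1 hcyc
  rcases transGen_insert_or hx with hx | ⟨hxu, hvx⟩
  · exact absurd hx (hSacyc x)
  rcases Relation.reflTransGen_iff_eq_or_transGen.1 (hvx.trans hxu) with rfl | hvu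
  · exact absurd rfl huv
  · exact (height_lt_of_transGen hSacyc hvu).ne

end GallaiRoy

section Coloring

variable {V : Type*} [Fintype V] [DecidableEq V] {A : V → V → Prop} {k : ℕ}
  {P : Finset (List V)}

lemma exists_coloring_orthoCP_of_partial {F : Finset (Finset V)}
    (hstable : ∀ c ∈ F, DStable A (c : Set V)) (hne : ∀ c ∈ F, c.Nonempty)
    (hdisj : ∀ c ∈ F, ∀ c' ∈ F, c ≠ c' → Disjoint c c') (hortho : OrthoCP k F P)
    (hcov : ∀ v ∉ cover P, ∃ c ∈ F, v ∈ c) :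
    ∃ C : Finset (Finset V), IsColoring A C ∧ OrthoCP k C P := by
  set singletons := (Finset.univ.filter fun v => ∀ c ∈ F, v ∉ c).image fun v => ({v} : Finset V)
  have hsingle : ∀ {c}, c ∈ singletons ↔ ∃ v, (∀ c ∈ F, v ∉ c) ∧ {v} = c := by
    simp [singletons]
  refine ⟨F ∪ singletons, ⟨fun c hc => ?_, fun c hc => ?_, fun c hc c' hc' hcc' => ?_,
    fun v => ?_⟩, fun c hc => ?_⟩
  · rcases Finset.mem_union.1 hc with hc | hc
    · exact hstable c hc
    · obtain ⟨v, -, rfl⟩ := hsingle.1 hc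
      intro x hx y hy hxy
      simp_all
  · rcases Finset.mem_union.1 hc with hc | hc
    · exact hne c hc
    · obtain ⟨v, -, rfl⟩ := hsingle.1 hc
      exact Finset.singleton_nonempty v
  · rcases Finset.mem_union.1 hc with hc | hc <;> rcases Finset.mem_union.1 hc' with hc' | hc'
    · exact hdisj c hc c' hc' hcc'
    · obtain ⟨v, hv, rfl⟩ := hsingle.1 hc'
      exact Finset.disjoint_singleton_right.2 (hv c hc)
    · obtain ⟨v, hv, rfl⟩ := hsingle.1 hc
      exact Finset.disjoint_singleton_left.2 (hv c' hc')
    · obtain ⟨v, -, rfl⟩ := hsingle.1 hc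
      obtain ⟨w, -, rfl⟩ := hsingle.1 hc'
      simpa [eq_comm] using hcc'
  · by_cases hv : ∃ c ∈ F, v ∈ c
    · obtain ⟨c, hc, hvc⟩ := hv
      exact ⟨c, Finset.mem_union_left _ hc, hvc⟩
    · exact ⟨{v}, Finset.mem_union_right _ (hsingle.2 ⟨v, by simpa using hv, rfl⟩),
        Finset.mem_singleton_self v⟩
  · rcases Finset.mem_union.1 hc with hc | hc
    · exact hortho c hc
    obtain ⟨v, hv, rfl⟩ := hsingle.1 hc
    obtain ⟨p, hp, hvp⟩ := mem_cover.1 (not_not.1 fun h => by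
      obtain ⟨c, hc, hvc⟩ := hcov v h
      exact hv c hc hvc)
    calc min ({v} : Finset V).card k ≤ 1 := by simp
      _ ≤ _ := Finset.card_pos.2 ⟨p, by simpa using ⟨hp, hvp⟩⟩

noncomputable def depthClass (P : Finset (List V)) (f : V → ℕ) (j : ℕ) : Finset V :=
  (cover P)ᶜ.filter (f · = j) ∪ Finset.univ.filter fun x => ∃ p ∈ P, IsNthLast p j x

variable {f : V → ℕ} {j : ℕ}

lemma mem_depthClass {x : V} :
    x ∈ depthClass P f j ↔ (x ∉ cover P ∧ f x = j) ∨ ∃ p ∈ P, IsNthLast p j x := by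
  simp [depthClass]

lemma IsPathLabelling.exists_path (hf : IsPathLabelling A (cover P)ᶜ f) {u : V}
    (hu : u ∉ cover P) :
    ∃ l, IsPath A l ∧ l.head? = some u ∧ (∀ x ∈ l, x ∉ cover P) ∧ l.length = f u := by
  obtain ⟨l, hl, hh, hlc, hlen⟩ := hf.1 u (Finset.mem_compl.2 hu)
  exact ⟨l, hl, hh, fun x hx => Finset.mem_compl.1 (hlc x hx), hlen⟩

lemma OptimalKPack.label_le_length (hP : OptimalKPack A k P)
    (hf : IsPathLabelling A (cover P)ᶜ f) {u : V} (hu : u ∉ cover P) {p : List V}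
    (hp : p ∈ P) : 1 ≤ f u ∧ f u ≤ p.length := by
  obtain ⟨l, hl, -, hlc, hlen⟩ := hf.exists_path hu
  exact hlen ▸ ⟨List.length_pos_of_ne_nil hl.1,
    hP.length_le_of_subset hp hl fun x hx => Or.inr (hlc x hx)⟩

lemma OptimalKPack.not_arc_depthClass (hP : OptimalKPack A k P) (hin : InSemicomplete A)
    (hf : IsPathLabelling A (cover P)ᶜ f) (hj : j ∈ (cover P)ᶜ.image f) {u v : V}
    (hu : u ∈ depthClass P f j) (hv : v ∈ depthClass P f j) (huv : u ≠ v) : ¬ A u v := by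
  intro hA
  rcases mem_depthClass.1 hu with ⟨huc, rfl⟩ | ⟨p, hp, hup⟩ <;>
    rcases mem_depthClass.1 hv with ⟨hvc, hfv⟩ | ⟨q, hq, hvq⟩
  · exact hf.2 u (Finset.mem_compl.2 huc) v (Finset.mem_compl.2 hvc) huv hA hfv.symm
  · exact hP.not_arc_of_notMem_cover hin hq huc hvq.mem hA
  · obtain ⟨s, t, rfl, ht⟩ := hup
    obtain ⟨l, hl, hh, hlc, hlen⟩ := hf.exists_path hvc
    have := hP.length_le_of_arc_to_uncovered hp hl hlc (by simpa [hh] using hA)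
    omega
  · obtain ⟨w, hw, rfl⟩ := Finset.mem_image.1 hj
    obtain ⟨l, hl, -, hlc, hlen⟩ := hf.exists_path (Finset.mem_compl.1 hw)
    refine hP.not_arc_of_isNthLast hin hp hq (fun hpq => huv ?_) hup hvq hl hlc hlen hA
    exact hup.unique (hpq ▸ hvq)

lemma OptimalKPack.dStable_depthClass (hP : OptimalKPack A k P) (hin : InSemicomplete A)
    (hf : IsPathLabelling A (cover P)ᶜ f) (hj : j ∈ (cover P)ᶜ.image f) :
    DStable A (depthClass P f j : Set V) := fun _ hu _ hv huv hadj =>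
  hadj.elim (hP.not_arc_depthClass hin hf hj hu hv huv)
    (hP.not_arc_depthClass hin hf hj hv hu huv.symm)

lemma OptimalKPack.disjoint_depthClass (hP : OptimalKPack A k P) {j' : ℕ} (hjj' : j ≠ j') :
    Disjoint (depthClass P f j) (depthClass P f j') := by
  refine Finset.disjoint_left.2 fun x hx hx' => ?_
  rcases mem_depthClass.1 hx with ⟨hxc, rfl⟩ | ⟨p, hp, hxp⟩ <;>
    rcases mem_depthClass.1 hx' with ⟨hxc', hfx⟩ | ⟨q, hq, hxq⟩
  · exact hjj' hfx
  · exact hxc (mem_cover.2 ⟨q, hq, hxq.mem⟩)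
  · exact hxc' (mem_cover.2 ⟨p, hp, hxp.mem⟩)
  · obtain rfl : p = q := by_contra fun hpq => hP.1.2.2 p hp q hq hpq x hxp.mem hxq.mem
    exact hjj' (hxp.eq_of_nodup (hP.1.2.1 p hp).2.1 hxq)

lemma OptimalKPack.card_le_card_filter_depthClass (hP : OptimalKPack A k P)
    (hf : IsPathLabelling A (cover P)ᶜ f) (hj : j ∈ (cover P)ᶜ.image f) :
    k ≤ (P.filter fun p => ∃ x ∈ depthClass P f j, x ∈ p).card := by
  obtain ⟨u, hu, rfl⟩ := Finset.mem_image.1 hj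
  have hu := Finset.mem_compl.1 hu
  rw [Finset.filter_true_of_mem, hP.card_eq_of_notMem_cover hu]
  intro p hp
  obtain ⟨h1, hle⟩ := hP.label_le_length hf hu hp
  obtain ⟨x, hx⟩ := exists_isNthLast h1 hle
  exact ⟨x, mem_depthClass.2 (Or.inr ⟨p, hp, hx⟩), hx.mem⟩

end Coloring

variable {V : Type*} [Fintype V] [DecidableEq V]

theorem stmt8_general (A : V → V → Prop) (hin : InSemicomplete A)
    (k : ℕ) (P : Finset (List V)) (hP : OptimalKPack A k P) :
    ∃ C : Finset (Finset V), IsColoring A C ∧ OrthoCP k C P := by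
  obtain ⟨f, hf⟩ := exists_isPathLabelling A (cover P)ᶜ
  refine exists_coloring_orthoCP_of_partial (F := ((cover P)ᶜ.image f).image (depthClass P f))
    ?_ ?_ ?_ ?_ ?_
  · simp only [Finset.forall_mem_image]
    exact fun u hu => hP.dStable_depthClass hin hf (Finset.mem_image_of_mem f hu)
  · simp only [Finset.forall_mem_image]
    exact fun u hu => ⟨u, mem_depthClass.2 (Or.inl ⟨Finset.mem_compl.1 hu, rfl⟩)⟩
  · simp only [Finset.forall_mem_image]
    exact fun _ _ _ _ huv => hP.disjoint_depthClass fun h => huv (by rw [h])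
  · simp only [OrthoCP, Finset.forall_mem_image]
    exact fun u hu => min_le_right _ _ |>.trans
      (hP.card_le_card_filter_depthClass hf (Finset.mem_image_of_mem f hu))
  · exact fun v hv => ⟨depthClass P f (f v), Finset.mem_image_of_mem _
      (Finset.mem_image_of_mem f (Finset.mem_compl.2 hv)),
      mem_depthClass.2 (Or.inl ⟨hv, rfl⟩)⟩

/-- Aharoni-Hartman-Hoffman's Conjecture for in-semicomplete digraphs. -/
theorem stmt8 (A : V → V → Prop) (hirr : Irreflexive A) (hin : InSemicomplete A)
    (k : ℕ) (hk : 0 < k) (P : Finset (List V)) (hP : OptimalKPack A k P) :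
    ∃ C : Finset (Finset V), IsColoring A C ∧ OrthoCP k C P :=
  stmt8_general A hin k P hP

end DigraphPaper
end

section
/- If P is an optimal k-pack of an out-semicomplete digraph D, then there exists a coloring of D orthogonal to P. -/
open scoped Classical

namespace DigraphPaper

variable {V : Type*} [Fintype V] [DecidableEq V]

/-!
If a vertex is uncovered, an optimal `k`-pack `P` has exactly `k` paths, none shorter than any
uncovered path. As long as some uncovered path has more than `j` vertices, colour `j` takes the
`j`-th vertex of every path of `P` together with the uncovered vertices of level `j + 1` in a
Gallai–Roy levelling of the uncovered part; all other vertices get colours of their own. Colour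
`j` then meets all `k` paths, and an arc inside it would give a heavier `k`-pack: an arc between
the `j`-th vertices of two paths lets their tails merge (by out-semicompleteness), freeing a slot
for the first `j + 1` vertices of an uncovered path; an arc from a covered to an uncovered vertex
lets the latter be inserted into a path; and an arc from the end of an uncovered path with `j + 1`
vertices to a `j`-th vertex lets that path replace the first `j` vertices of a path of `P`.
-/

namespace OutSemicomplete

variable {α : Type*} {A : α → α → Prop}

/-- Walk forward along the arcs into `u` until `u` can be placed before the next vertex. -/
theorem exists_perm_cons_of_arc (hout : OutSemicomplete A) {p : List α} (hp : p.IsChain A)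
    {u x : α} (hu : u ∉ p) (hx : x ∈ p) (hxu : A x u) :
    ∃ r : List α, r.IsChain A ∧ r.Perm (u :: p) := by
  obtain ⟨l₁, l₂, rfl⟩ := List.append_of_mem hx
  clear hx
  induction l₂ generalizing l₁ x with
  | nil =>
    refine ⟨l₁ ++ [x, u], ?_, ?_⟩
    · rw [show l₁ ++ [x, u] = (l₁ ++ [x]) ++ [u] by simp, List.isChain_append]
      exact ⟨hp, List.isChain_singleton u, by simp [hxu]⟩
    · simpa using List.perm_append_singleton u (l₁ ++ [x])
  | cons y l₂ ih =>
    have hsplit := List.isChain_split.mp hp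
    have hxy : A x y := (List.isChain_cons_cons.mp hsplit.2).1
    have huy : u ≠ y := fun h => hu (by simp [h])
    rcases hout x u y hxu hxy huy with huy | hyu
    · refine ⟨(l₁ ++ [x]) ++ u :: y :: l₂, ?_, ?_⟩
      · rw [List.isChain_split]
        refine ⟨?_, List.isChain_cons_cons.mpr ⟨huy, (List.isChain_cons_cons.mp hsplit.2).2⟩⟩
        rw [List.isChain_append]
        exact ⟨hsplit.1, List.isChain_singleton u, by simp [hxu]⟩
      · simpa using List.perm_middle (a := u) (l₁ := l₁ ++ [x]) (l₂ := y :: l₂)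
    · simpa using ih hyu (l₁ ++ [x]) (by simpa using hp) (by simpa using hu)

/-- Out-semicompleteness at `a` gives an arc between `b` and the successor `c` of `a`; recurse
from its tail. -/
theorem exists_merge (hout : OutSemicomplete A) {a b : α} {p q : List α}
    (hp : (a :: p).IsChain A) (hq : (b :: q).IsChain A) (hpq : ∀ x ∈ a :: p, x ∉ b :: q)
    (hab : A a b) :
    ∃ z : List α, z.IsChain A ∧ z.Perm (a :: p ++ b :: q) ∧ z.head? = some a := by
  match p with
  | [] => exact ⟨a :: b :: q, List.isChain_cons_cons.mpr ⟨hab, hq⟩, List.Perm.refl _, rfl⟩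
  | c :: p' =>
    obtain ⟨hac, hp'⟩ := List.isChain_cons_cons.mp hp
    have hcb : c ≠ b := fun h => hpq c (by simp) (by simp [h])
    rcases hout a c b hac hab hcb with hcb | hbc
    · obtain ⟨z, hz, hzperm, hzhead⟩ := exists_merge hout hp' hq
        (fun x hx => hpq x (List.mem_cons_of_mem a hx)) hcb
      exact ⟨a :: z, List.isChain_cons.mpr ⟨by simp [hzhead, hac], hz⟩, hzperm.cons a, rfl⟩
    · obtain ⟨z, hz, hzperm, hzhead⟩ := exists_merge hout hq hp'
        (fun x hx hx' => hpq x (List.mem_cons_of_mem a hx') hx) hbc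
      refine ⟨a :: z, List.isChain_cons.mpr ⟨by simp [hzhead, hab], hz⟩, ?_, rfl⟩
      exact (hzperm.trans List.perm_append_comm).cons a
termination_by p.length + q.length

/-- Keep `p` up to position `j`, then merge the tails of `p` and `q` from position `j` on. -/
theorem exists_isPath_perm_append_drop (hout : OutSemicomplete A) {p q : List α}
    (hp : IsPath A p) (hq : IsPath A q) (hpq : ∀ x ∈ p, x ∉ q) {j : ℕ} (hjp : j < p.length)
    (hjq : j < q.length) (hA : A p[j] q[j]) :
    ∃ r : List α, IsPath A r ∧ r.Perm (p ++ q.drop j) := by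
  have hdropq : ∀ x ∈ q.drop j, x ∈ q := fun x hx => (List.drop_sublist j q).mem hx
  have hcp := hp.2.2.drop j
  have hcq := hq.2.2.drop j
  rw [List.drop_eq_getElem_cons hjp] at hcp
  rw [List.drop_eq_getElem_cons hjq] at hcq
  obtain ⟨z, hz, hzperm, hzhead⟩ := hout.exists_merge hcp hcq (by
    rw [← List.drop_eq_getElem_cons hjp, ← List.drop_eq_getElem_cons hjq]
    exact fun x hx hx' => hpq x ((List.drop_sublist j p).mem hx) (hdropq x hx')) hA
  rw [← List.drop_eq_getElem_cons hjp, ← List.drop_eq_getElem_cons hjq] at hzperm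
  have hperm : (p.take j ++ z).Perm (p ++ q.drop j) := by
    simpa [← List.append_assoc] using hzperm.append_left (p.take j)
  refine ⟨p.take j ++ z, ⟨List.ne_nil_of_length_pos (by simp [hperm.length_eq]; omega), ?_, ?_⟩,
    hperm⟩
  · refine hperm.nodup_iff.mpr (List.nodup_append'.mpr
      ⟨hp.2.1, (List.drop_sublist j q).nodup hq.2.1, fun x hx hx' => hpq x hx (hdropq x hx')⟩)
  · have hsplit := List.isChain_append.mp ((List.take_append_drop j p).symm ▸ hp.2.2)
    refine List.isChain_append.mpr ⟨hsplit.1, hz, ?_⟩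
    rw [hzhead, ← List.getElem?_eq_getElem hjp, ← List.head?_drop]
    exact hsplit.2.2

end OutSemicomplete

theorem mem_cover_iff {α : Type*} [DecidableEq α] {P : Finset (List α)} {x : α} :
    x ∈ cover P ↔ ∃ p ∈ P, x ∈ p := by
  simp [cover]

namespace OptimalKPack

variable {α : Type*} [DecidableEq α] {A : α → α → Prop} {k : ℕ} {P : Finset (List α)}

/-- `(P \ P₀) ∪ R` is again a `k`-pack. -/
theorem weight_le_of_exchange_s9 (hP : OptimalKPack A k P) {P₀ R : Finset (List α)}
    (hP₀ : P₀ ⊆ P) (hR : IsKPack A (k - (P \ P₀).card) R)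
    (hRP : ∀ r ∈ R, ∀ x ∈ r, x ∈ cover P₀ ∨ x ∉ cover P) :
    weight R ≤ weight P₀ := by
  obtain ⟨⟨hcard, hpaths, hdisj⟩, hopt⟩ := hP
  obtain ⟨hRcard, hRpaths, hRdisj⟩ := hR
  have hsep : ∀ r ∈ R, ∀ q ∈ P \ P₀, ∀ x ∈ r, x ∉ q := by
    intro r hr q hq x hxr hxq
    obtain ⟨hqP, hqP₀⟩ := Finset.mem_sdiff.mp hq
    rcases hRP r hr x hxr with hx | hx
    · obtain ⟨p, hp, hxp⟩ := mem_cover_iff.mp hx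
      exact hdisj q hqP p (hP₀ hp) (fun h => hqP₀ (h ▸ hp)) x hxq hxp
    · exact hx (mem_cover_iff.mpr ⟨q, hqP, hxq⟩)
  have hRP' : Disjoint (P \ P₀) R := by
    refine Finset.disjoint_right.mpr fun r hr hr' => ?_
    obtain ⟨x, hx⟩ := List.exists_mem_of_ne_nil r (hRpaths r hr).1
    exact hsep r hr r hr' x hx hx
  have hpack : IsKPack A k ((P \ P₀) ∪ R) := by
    refine ⟨?_, ?_, ?_⟩
    · have : (P \ P₀).card ≤ k := (Finset.card_le_card Finset.sdiff_subset).trans hcard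
      rw [Finset.card_union_of_disjoint hRP']
      omega
    · intro p hp
      rcases Finset.mem_union.mp hp with hp | hp
      · exact hpaths p (Finset.mem_sdiff.mp hp).1
      · exact hRpaths p hp
    · intro p hp q hq hpq x hxp
      rcases Finset.mem_union.mp hp with hp | hp <;> rcases Finset.mem_union.mp hq with hq | hq
      · exact hdisj p (Finset.mem_sdiff.mp hp).1 q (Finset.mem_sdiff.mp hq).1 hpq x hxp
      · exact fun hxq => hsep q hq p hp x hxq hxp
      · exact hsep p hp q hq x hxp
      · exact hRdisj p hp q hq hpq x hxp
  have hweight := hopt _ hpack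
  rw [weight, Finset.sum_union hRP'] at hweight
  rw [weight, ← Finset.sum_sdiff hP₀] at hweight
  exact Nat.le_of_add_le_add_left hweight

theorem card_eq_of_notMem_cover_s9 (hP : OptimalKPack A k P) {u : α}
    (hu : u ∉ cover P) : P.card = k := by
  by_contra hne
  have hlt : P.card < k := lt_of_le_of_ne hP.1.1 hne
  have hsingle : IsKPack A (k - (P \ ∅).card) {[u]} :=
    ⟨by simp; omega, fun r hr => Finset.mem_singleton.mp hr ▸
      ⟨List.cons_ne_nil _ _, List.nodup_singleton u, List.isChain_singleton u⟩,
      by simp [PDisjoint]⟩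
  have := hP.weight_le_of_exchange_s9 (Finset.empty_subset P) hsingle (by simp [hu])
  simp [weight] at this

theorem length_le_of_isPath (hP : OptimalKPack A k P) {p r : List α} (hp : p ∈ P)
    (hr : IsPath A r) (hrp : ∀ x ∈ r, x ∈ p ∨ x ∉ cover P) : r.length ≤ p.length := by
  have hsingle : IsKPack A (k - (P \ {p}).card) {r} := by
    refine ⟨?_, by simpa using hr, by simp [PDisjoint]⟩
    have : 1 ≤ P.card := Finset.card_pos.mpr ⟨p, hp⟩
    rw [Finset.card_sdiff_of_subset (Finset.singleton_subset_iff.mpr hp)]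
    simp only [Finset.card_singleton]
    have := hP.1.1
    omega
  have := hP.weight_le_of_exchange_s9 (Finset.singleton_subset_iff.mpr hp) hsingle (by
    simpa [mem_cover_iff] using hrp)
  simpa [weight] using this

theorem length_add_length_le_of_isPath (hP : OptimalKPack A k P) {p q r s : List α}
    (hp : p ∈ P) (hq : q ∈ P) (hpq : p ≠ q) (hr : IsPath A r) (hs : IsPath A s)
    (hrpq : ∀ x ∈ r, x ∈ p ∨ x ∈ q) (hsU : ∀ x ∈ s, x ∉ cover P) :
    r.length + s.length ≤ p.length + q.length := by
  have hrcov : ∀ x ∈ r, x ∈ cover P := fun x hx =>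
    mem_cover_iff.mpr ((hrpq x hx).elim (⟨p, hp, ·⟩) (⟨q, hq, ·⟩))
  have hrs : ∀ x ∈ r, x ∉ s := fun x hx hxs => hsU x hxs (hrcov x hx)
  have hrs' : r ≠ s := by
    obtain ⟨x, hx⟩ := List.exists_mem_of_ne_nil r hr.1
    exact fun h => hrs x hx (h ▸ hx)
  have hsub : {p, q} ⊆ P := Finset.insert_subset hp (Finset.singleton_subset_iff.mpr hq)
  have hpack : IsKPack A (k - (P \ {p, q}).card) {r, s} := by
    refine ⟨?_, ?_, ?_⟩
    · rw [Finset.card_sdiff_of_subset hsub, Finset.card_pair hpq, Finset.card_pair hrs']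
      have := Finset.card_le_card hsub
      rw [Finset.card_pair hpq] at this
      have := hP.1.1
      omega
    · simp [hr, hs]
    · intro a ha b hb hab x hxa hxb
      simp only [Finset.mem_insert, Finset.mem_singleton] at ha hb
      rcases ha with rfl | rfl <;> rcases hb with rfl | rfl
      exacts [hab rfl, hrs x hxa hxb, hrs x hxb hxa, hab rfl]
  have := hP.weight_le_of_exchange_s9 hsub hpack (by
    simp only [Finset.mem_insert, Finset.mem_singleton, forall_eq_or_imp, forall_eq]
    exact ⟨fun x hx => Or.inl (mem_cover_iff.mpr (by simpa using hrpq x hx)),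
      fun x hx => Or.inr (hsU x hx)⟩)
  rwa [weight, weight, Finset.sum_pair hrs', Finset.sum_pair hpq] at this

/-- Otherwise the uncovered vertex could be inserted into the path through `x`. -/
theorem not_arc_of_mem_cover (hout : OutSemicomplete A) (hP : OptimalKPack A k P)
    {x u : α} (hx : x ∈ cover P) (hu : u ∉ cover P) : ¬ A x u := by
  intro hxu
  obtain ⟨p, hp, hxp⟩ := mem_cover_iff.mp hx
  have hpath := hP.1.2.1 p hp
  have hup : u ∉ p := fun h => hu (mem_cover_iff.mpr ⟨p, hp, h⟩)
  obtain ⟨r, hr, hperm⟩ := hout.exists_perm_cons_of_arc hpath.2.2 hup hxp hxu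
  have hrpath : IsPath A r :=
    ⟨List.ne_nil_of_length_pos (by simp [hperm.length_eq]),
      hperm.nodup_iff.mpr (List.nodup_cons.mpr ⟨hup, hpath.2.1⟩), hr⟩
  have := hP.length_le_of_isPath hp hrpath fun y hy => by
    rcases List.mem_cons.mp (hperm.mem_iff.mp hy) with rfl | hy
    exacts [Or.inr hu, Or.inl hy]
  simp [hperm.length_eq] at this

/-- Otherwise `w ++ p.drop i` would beat `p`. -/
theorem not_arc_getElem_of_uncovered (hP : OptimalKPack A k P) {w p : List α}
    (hw : IsPath A w) (hwU : ∀ x ∈ w, x ∉ cover P) {u : α} (hlast : w.getLast? = some u)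
    (hp : p ∈ P) {i : ℕ} (hiw : i < w.length) (hip : i < p.length) : ¬ A u p[i] := by
  intro hA
  have hpath := hP.1.2.1 p hp
  have hdrop : ∀ x ∈ p.drop i, x ∈ p := fun x hx => (List.drop_sublist i p).mem hx
  have hrpath : IsPath A (w ++ p.drop i) := by
    refine ⟨by simp [hw.1], ?_, ?_⟩
    · refine List.nodup_append'.mpr ⟨hw.2.1, (List.drop_sublist i p).nodup hpath.2.1, ?_⟩
      exact fun x hx hx' => hwU x hx (mem_cover_iff.mpr ⟨p, hp, hdrop x hx'⟩)
    · refine List.isChain_append.mpr ⟨hw.2.2, hpath.2.2.drop i, ?_⟩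
      simpa [hlast, List.head?_drop, hip] using hA
  have := hP.length_le_of_isPath hp hrpath fun x hx => by
    rcases List.mem_append.mp hx with hx | hx
    exacts [Or.inr (hwU x hx), Or.inl (hdrop x hx)]
  simp only [List.length_append, List.length_drop] at this
  omega

/-- Otherwise `p.take j` followed by the merge of the tails `p.drop j` and `q.drop j`, together
with `W.take (j + 1)`, would beat `p` and `q`. -/
theorem not_arc_getElem_getElem (hout : OutSemicomplete A)
    (hP : OptimalKPack A k P) {W : List α} (hW : IsPath A W) (hWU : ∀ x ∈ W, x ∉ cover P)
    {p q : List α} (hp : p ∈ P) (hq : q ∈ P) (hpq : p ≠ q) {j : ℕ} (hjW : j < W.length)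
    (hjp : j < p.length) (hjq : j < q.length) : ¬ A p[j] q[j] := by
  intro hA
  obtain ⟨r, hr, hperm⟩ := hout.exists_isPath_perm_append_drop (hP.1.2.1 p hp) (hP.1.2.1 q hq)
    (hP.1.2.2 p hp q hq hpq) hjp hjq hA
  have hspath : IsPath A (W.take (j + 1)) :=
    ⟨by simp [List.take_eq_nil_iff, hW.1], (List.take_sublist _ _).nodup hW.2.1, hW.2.2.take _⟩
  have := hP.length_add_length_le_of_isPath hp hq hpq hr hspath
    (fun x hx => by
      rcases List.mem_append.mp (hperm.mem_iff.mp hx) with hx | hx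
      exacts [Or.inl hx, Or.inr ((List.drop_sublist j q).mem hx)])
    (fun x hx => hWU x ((List.take_sublist _ _).mem hx))
  simp only [hperm.length_eq, List.length_append, List.length_drop, List.length_take] at this
  omega

end OptimalKPack

section Level

open Relation

variable {α : Type*} {R : α → α → Prop}

theorem nodup_of_isChain_of_acyclic (hR : ∀ a, ¬ TransGen R a a) {l : List α}
    (hl : l.IsChain R) : l.Nodup :=
  haveI : Std.Irrefl (TransGen R) := ⟨hR⟩
  (List.isChain_iff_pairwise.mp (hl.imp fun _ _ => TransGen.single)).nodup

theorem reflTransGen_or_of_reflTransGen_sup_arc {u w x y : α}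
    (h : ReflTransGen (fun a b => a = u ∧ b = w ∨ R a b) x y) :
    ReflTransGen R x y ∨ ReflTransGen R x u ∧ ReflTransGen R w y := by
  induction h with
  | refl => exact Or.inl ReflTransGen.refl
  | tail _ hbc ih =>
    rcases hbc with ⟨rfl, rfl⟩ | hbc
    · exact Or.inr ⟨ih.elim id (·.1), ReflTransGen.refl⟩
    · exact ih.imp (·.tail hbc) fun h => ⟨h.1, h.2.tail hbc⟩

theorem reflTransGen_of_transGen_sup_arc (hR : ∀ a, ¬ TransGen R a a) {u w x : α}
    (h : TransGen (fun a b => a = u ∧ b = w ∨ R a b) x x) : ReflTransGen R w u := by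
  obtain ⟨m, hxm, hmx⟩ := TransGen.tail'_iff.mp h
  rcases hmx with ⟨rfl, rfl⟩ | hmx <;>
    rcases reflTransGen_or_of_reflTransGen_sup_arc hxm with hxm' | ⟨hxu, hwm⟩
  · exact hxm'
  · exact hwm
  · exact absurd (TransGen.tail' hxm' hmx) (hR x)
  · exact (hwm.tail hmx).trans hxu

variable [Fintype α]

theorem exists_maximal_acyclic (R : α → α → Prop) :
    ∃ F : α → α → Prop, (∀ a b, F a b → R a b) ∧ (∀ a, ¬ TransGen F a a) ∧
      ∀ a b, R a b → F a b ∨ ReflTransGen F b a := by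
  set B := Finset.univ.filter fun e : α × α => R e.1 e.2
  set fam := B.powerset.filter fun F => ∀ x, ¬ TransGen (fun a b => (a, b) ∈ F) x x
  have hempty : ∅ ∈ fam := by
    refine Finset.mem_filter.mpr ⟨Finset.empty_mem_powerset B, fun x hx => ?_⟩
    obtain ⟨_, h⟩ := TransGen.tail'_iff.mp hx
    simp at h
  obtain ⟨F, hF, hmax⟩ := fam.exists_max_image Finset.card ⟨∅, hempty⟩
  obtain ⟨hFpow, hFacyclic⟩ := Finset.mem_filter.mp hF
  have hFB : F ⊆ B := Finset.mem_powerset.mp hFpow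
  refine ⟨fun a b => (a, b) ∈ F, fun a b h => by simpa [B] using hFB h, hFacyclic, ?_⟩
  intro a b hab
  refine or_iff_not_imp_left.mpr fun hnot => ?_
  have hcyclic : ¬ ∀ z, ¬ TransGen (fun x y => (x, y) ∈ insert (a, b) F) z z := by
    intro hacyclic
    have hmem : insert (a, b) F ∈ fam := Finset.mem_filter.mpr
      ⟨Finset.mem_powerset.mpr (Finset.insert_subset (by simpa [B] using hab) hFB), hacyclic⟩
    have := hmax _ hmem
    rw [Finset.card_insert_of_notMem hnot] at this
    omega
  obtain ⟨x, hx⟩ := not_forall.mp hcyclic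
  simp only [not_not, Finset.mem_insert, Prod.mk.injEq] at hx
  exact reflTransGen_of_transGen_sup_arc hFacyclic hx

/-- `lev u` is the number of vertices of a longest chain ending at `u`. -/
theorem exists_level_of_acyclic (hR : ∀ a, ¬ TransGen R a a) :
    ∃ lev : α → ℕ, (∀ u, ∃ q : List α, q.IsChain R ∧ q.getLast? = some u ∧ q.length = lev u) ∧
      ∀ a b, R a b → lev a < lev b := by
  set lengths : α → Set ℕ :=
    fun u => {n | ∃ q : List α, q.IsChain R ∧ q.getLast? = some u ∧ q.length = n}
  have hbdd : ∀ u, BddAbove (lengths u) := fun u => ⟨Fintype.card α, by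
    rintro _ ⟨q, hq, -, rfl⟩
    exact (nodup_of_isChain_of_acyclic hR hq).length_le_card⟩
  have hne : ∀ u, (lengths u).Nonempty := fun u => ⟨1, [u], List.isChain_singleton u, rfl, rfl⟩
  refine ⟨fun u => sSup (lengths u), fun u => Nat.sSup_mem (hne u) (hbdd u), fun a b hab => ?_⟩
  obtain ⟨q, hq, hlast, hlen⟩ := Nat.sSup_mem (hne a) (hbdd a)
  have hext : q.length + 1 ∈ lengths b :=
    ⟨q ++ [b], List.isChain_append.mpr ⟨hq, List.isChain_singleton b, by simpa [hlast]⟩,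
      by simp, by simp⟩
  show sSup (lengths a) < sSup (lengths b)
  rw [← hlen]
  exact Nat.lt_of_succ_le (le_csSup (hbdd b) hext)

/-- Gallai–Roy: the longest-chain levels of a maximal acyclic subrelation. -/
theorem exists_level (R : α → α → Prop) :
    ∃ lev : α → ℕ, (∀ u, ∃ q : List α, IsPath R q ∧ q.getLast? = some u ∧ q.length = lev u) ∧
      ∀ u w, u ≠ w → R u w → lev u ≠ lev w := by
  obtain ⟨F, hFR, hF, hmax⟩ := exists_maximal_acyclic R
  obtain ⟨lev, hpath, hlt⟩ := exists_level_of_acyclic hF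
  have hmono : ∀ a b, TransGen F a b → lev a < lev b := fun a b h => by
    induction h with
    | single h => exact hlt _ _ h
    | tail _ h ih => exact ih.trans (hlt _ _ h)
  refine ⟨lev, fun u => ?_, fun u w huw hR => ?_⟩
  · obtain ⟨q, hq, hlast, hlen⟩ := hpath u
    exact ⟨q, ⟨fun h => by simp [h] at hlast, nodup_of_isChain_of_acyclic hF hq, hq.imp hFR⟩,
      hlast, hlen⟩
  · rcases hmax u w hR with h | h
    · exact (hlt u w h).ne
    · rcases reflTransGen_iff_eq_or_transGen.mp h with h | h
      · exact absurd h huw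
      · exact (hmono w u h).ne'

end Level

section Fibers

variable {α ι : Type*} [Fintype α] [DecidableEq α] [DecidableEq ι]

def fibers (f : α → ι) : Finset (Finset α) :=
  Finset.univ.image fun v => Finset.univ.filter fun w => f w = f v

theorem mem_fibers {f : α → ι} {c : Finset α} :
    c ∈ fibers f ↔ ∃ v, Finset.univ.filter (fun w => f w = f v) = c := by
  simp [fibers]

theorem isColoring_fibers {A : α → α → Prop} {f : α → ι}
    (hf : ∀ a b, a ≠ b → A a b → f a ≠ f b) : IsColoring A (fibers f) := by
  refine ⟨?_, ?_, ?_, fun v => ⟨_, mem_fibers.mpr ⟨v, rfl⟩, by simp⟩⟩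
  · rintro c hc a ha b hb hab (h | h) <;> obtain ⟨v, rfl⟩ := mem_fibers.mp hc <;>
      simp only [Finset.coe_filter, Finset.mem_univ, true_and] at ha hb
    · exact hf a b hab h (ha.trans hb.symm)
    · exact hf b a hab.symm h (hb.trans ha.symm)
  · intro c hc
    obtain ⟨v, rfl⟩ := mem_fibers.mp hc
    exact ⟨v, by simp⟩
  · intro c hc c' hc' hne
    obtain ⟨v, rfl⟩ := mem_fibers.mp hc
    obtain ⟨v', rfl⟩ := mem_fibers.mp hc'
    refine Finset.disjoint_left.mpr fun x hx hx' => hne ?_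
    simp only [Finset.mem_filter, Finset.mem_univ, true_and] at hx hx'
    simp only [← hx, hx']

end Fibers

section Position

variable {α : Type*} [DecidableEq α] {P : Finset (List α)}

/-- The index of `v` on its path in `P`; `0` when `v` is uncovered. -/
noncomputable def position (P : Finset (List α)) (v : α) : ℕ :=
  sInf {j | ∃ p ∈ P, p[j]? = some v}

theorem exists_getElem?_position {v : α} (hv : v ∈ cover P) :
    ∃ p ∈ P, p[position P v]? = some v := by
  obtain ⟨p, hp, hvp⟩ := mem_cover_iff.mp hv
  obtain ⟨j, hj, rfl⟩ := List.getElem_of_mem hvp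
  exact Nat.sInf_mem (s := {i | ∃ q ∈ P, q[i]? = some p[j]})
    ⟨j, p, hp, List.getElem?_eq_getElem hj⟩

theorem position_getElem (hdisj : PDisjoint P) (hnodup : ∀ p ∈ P, p.Nodup) {p : List α}
    (hp : p ∈ P) {j : ℕ} (hj : j < p.length) : position P p[j] = j := by
  have : {i | ∃ q ∈ P, q[i]? = some p[j]} = {j} := by
    ext i
    refine ⟨fun ⟨q, hq, hqi⟩ => ?_,
      fun hi => ⟨p, hp, by simp [Set.mem_singleton_iff.mp hi, hj]⟩⟩
    obtain ⟨hi, hqi⟩ := List.getElem?_eq_some_iff.mp hqi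
    obtain rfl : q = p := by
      by_contra hqp
      exact hdisj q hq p hp hqp _ (List.getElem_mem hi) (hqi ▸ List.getElem_mem hj)
    exact (hnodup q hq).getElem_inj_iff.mp hqi
  rw [position, this, csInf_singleton]

end Position

section PackColor

variable {α : Type*} [DecidableEq α] {A : α → α → Prop} {k : ℕ} {P : Finset (List α)}

def HasUncoveredPathLongerThan (A : α → α → Prop) (P : Finset (List α)) (n : ℕ) : Prop :=
  ∃ w : List α, IsPath A w ∧ (∀ x ∈ w, x ∉ cover P) ∧ n < w.length

/-- A Gallai–Roy levelling of the digraph induced on the vertices not covered by `P`. -/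
def IsUncoveredLevel (A : α → α → Prop) (P : Finset (List α)) (lev : α → ℕ) : Prop :=
  (∀ u ∉ cover P, ∃ w : List α, IsPath A w ∧ (∀ x ∈ w, x ∉ cover P) ∧ w.getLast? = some u ∧
      w.length = lev u) ∧
    ∀ u w, u ∉ cover P → w ∉ cover P → u ≠ w → A u w → lev u ≠ lev w

theorem exists_isUncoveredLevel [Fintype α] (A : α → α → Prop) (P : Finset (List α)) :
    ∃ lev, IsUncoveredLevel A P lev := by
  obtain ⟨lev, hpath, hne⟩ := exists_level fun a b => A a b ∧ a ∉ cover P ∧ b ∉ cover P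
  refine ⟨lev, fun u hu => ?_, fun u w hu hw huw hA => hne u w huw ⟨hA, hu, hw⟩⟩
  obtain ⟨q, hq, hlast, hlen⟩ := hpath u
  refine ⟨q, ⟨hq.1, hq.2.1, hq.2.2.imp fun _ _ h => h.1⟩, ?_, hlast, hlen⟩
  refine hq.2.2.backwards_induction _ _ (fun _ _ h _ => h.2.1) fun hne => ?_
  rwa [Option.some.inj ((List.getLast?_eq_some_getLast hne).symm.trans hlast)]

/-- `.inl j` is the shared colour `j` of the proof idea, `.inr v` a colour of `v` alone. -/
noncomputable def packColor (A : α → α → Prop) (P : Finset (List α)) (lev : α → ℕ) (v : α) :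
    ℕ ⊕ α :=
  if v ∈ cover P then
    if HasUncoveredPathLongerThan A P (position P v) then .inl (position P v) else .inr v
  else .inl (lev v - 1)

variable {lev : α → ℕ}

theorem IsUncoveredLevel.one_le (hlev : IsUncoveredLevel A P lev) {u : α} (hu : u ∉ cover P) :
    1 ≤ lev u := by
  obtain ⟨w, hw, -, -, hlen⟩ := hlev.1 u hu
  exact hlen ▸ List.length_pos_of_ne_nil hw.1

theorem hasUncoveredPathLongerThan_of_packColor_eq_inl (hlev : IsUncoveredLevel A P lev)
    {v : α} {j : ℕ} (h : packColor A P lev v = .inl j) : HasUncoveredPathLongerThan A P j := by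
  unfold packColor at h
  split_ifs at h with hv hlong
  · exact Sum.inl.inj h ▸ hlong
  · obtain ⟨w, hw, hwU, -, hlen⟩ := hlev.1 v hv
    have := hlev.one_le hv
    exact ⟨w, hw, hwU, by rw [← Sum.inl.inj h]; omega⟩

theorem packColor_getElem (hP : OptimalKPack A k P) {p : List α} (hp : p ∈ P) {j : ℕ}
    (hj : j < p.length) (hlong : HasUncoveredPathLongerThan A P j) :
    packColor A P lev p[j] = .inl j := by
  have hcov : p[j] ∈ cover P := mem_cover_iff.mpr ⟨p, hp, List.getElem_mem hj⟩
  have hpos := position_getElem hP.1.2.2 (fun q hq => (hP.1.2.1 q hq).2.1) hp hj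
  simp [packColor, hcov, hpos, hlong]

theorem packColor_ne (hout : OutSemicomplete A) (hP : OptimalKPack A k P)
    (hlev : IsUncoveredLevel A P lev) {a b : α} (hab : a ≠ b) (hA : A a b) :
    packColor A P lev a ≠ packColor A P lev b := by
  intro hcol
  by_cases ha : a ∈ cover P <;> by_cases hb : b ∈ cover P
  · obtain ⟨p, hp, hpa⟩ := exists_getElem?_position ha
    obtain ⟨q, hq, hqb⟩ := exists_getElem?_position hb
    simp only [packColor, ha, hb, if_true] at hcol
    split_ifs at hcol with hlong
    · rw [← Sum.inl.inj hcol] at hqb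
      obtain ⟨W, hW, hWU, hjW⟩ := hlong
      obtain ⟨hjp, hpa⟩ := List.getElem?_eq_some_iff.mp hpa
      obtain ⟨hjq, hqb⟩ := List.getElem?_eq_some_iff.mp hqb
      have hpq : p ≠ q := by rintro rfl; exact hab (hpa.symm.trans hqb)
      rw [← hpa, ← hqb] at hA
      exact hP.not_arc_getElem_getElem hout hW hWU hp hq hpq hjW hjp hjq hA
    · exact hab (Sum.inr.inj hcol)
  · exact hP.not_arc_of_mem_cover hout ha hb hA
  · obtain ⟨q, hq, hqb⟩ := exists_getElem?_position hb
    simp only [packColor, ha, hb, if_true, if_false] at hcol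
    split_ifs at hcol
    rw [← Sum.inl.inj hcol] at hqb
    obtain ⟨hjq, rfl⟩ := List.getElem?_eq_some_iff.mp hqb
    obtain ⟨w, hw, hwU, hlast, hlen⟩ := hlev.1 a ha
    have := hlev.one_le ha
    exact hP.not_arc_getElem_of_uncovered hw hwU hlast hq (by omega) hjq hA
  · have h1 := hlev.one_le ha
    have h2 := hlev.one_le hb
    simp only [packColor, ha, hb, if_false, Sum.inl.injEq] at hcol
    exact hlev.2 a b ha hb hab hA (by omega)

theorem packColor_eq_inr {v w : α} (h : packColor A P lev v = .inr w) :
    v ∈ cover P ∧ v = w := by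
  unfold packColor at h
  split_ifs at h with hv
  exact ⟨hv, Sum.inr.inj h⟩

theorem orthoCP_fibers_packColor [Fintype α] (hP : OptimalKPack A k P)
    (hlev : IsUncoveredLevel A P lev) : OrthoCP k (fibers (packColor A P lev)) P := by
  intro c hc
  obtain ⟨v, rfl⟩ := mem_fibers.mp hc
  obtain ⟨j, hv⟩ | ⟨w, hv⟩ : (∃ j, packColor A P lev v = .inl j) ∨
      ∃ w, packColor A P lev v = .inr w := by
    cases packColor A P lev v <;> simp
  · have hlong := hasUncoveredPathLongerThan_of_packColor_eq_inl hlev hv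
    obtain ⟨W, hW, hWU, hjW⟩ := id hlong
    calc _ ≤ k := min_le_right _ _
      _ = P.card := (hP.card_eq_of_notMem_cover_s9 (hWU _ (List.head_mem hW.1))).symm
      _ = _ := by
        rw [Finset.filter_true_of_mem]
        intro p hp
        have hjp : j < p.length := hjW.trans_le
          (hP.length_le_of_isPath hp hW fun x hx => Or.inr (hWU x hx))
        exact ⟨p[j], by simp [packColor_getElem hP hp hjp hlong, hv], List.getElem_mem hjp⟩
  · obtain ⟨hvcov, rfl⟩ := packColor_eq_inr hv
    obtain ⟨p, hp, hvp⟩ := mem_cover_iff.mp hvcov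
    have hsub : Finset.univ.filter (fun x => packColor A P lev x = packColor A P lev v) ⊆ {v} :=
      fun x hx => by simpa using (packColor_eq_inr ((Finset.mem_filter.mp hx).2.trans hv)).2
    calc _ ≤ _ := min_le_left _ _
      _ ≤ 1 := (Finset.card_le_card hsub).trans (Finset.card_singleton v).le
      _ ≤ _ := Finset.card_pos.mpr ⟨p, Finset.mem_filter.mpr ⟨hp, v, by simp, hvp⟩⟩

end PackColor

theorem stmt9_general (A : V → V → Prop) (hout : OutSemicomplete A)
    (k : ℕ) (P : Finset (List V)) (hP : OptimalKPack A k P) :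
    ∃ C : Finset (Finset V), IsColoring A C ∧ OrthoCP k C P := by
  obtain ⟨lev, hlev⟩ := exists_isUncoveredLevel A P
  exact ⟨fibers (packColor A P lev), isColoring_fibers fun _ _ => packColor_ne hout hP hlev,
    orthoCP_fibers_packColor hP hlev⟩

/-- Aharoni-Hartman-Hoffman's Conjecture for out-semicomplete digraphs. -/
theorem stmt9 (A : V → V → Prop) (hirr : Irreflexive A) (hout : OutSemicomplete A)
    (k : ℕ) (hk : 0 < k) (P : Finset (List V)) (hP : OptimalKPack A k P) :
    ∃ C : Finset (Finset V), IsColoring A C ∧ OrthoCP k C P :=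
  stmt9_general A hout k P hP

end DigraphPaper
end

section
/- In every in-semicomplete digraph D, if there exists a path partition P such that e(P) is stable, then the 1-norm π_1(D) ≤ |P|; in particular, for any path partition of an in-semicomplete digraph, either e(P) is not stable and P can be replaced by a partition with fewer paths, or e(P) is a stable set witnessing π(D) ≤ α(D). -/
/-! If the last vertices `u`, `v` of two paths of a partition are joined by an arc `u → v`,
the two paths can be merged into one. By induction on their total length: the predecessor `w`
of `v` on its path and `u` are both in-neighbours of `v`, hence adjacent, so merge the two
shortened paths along the arc between `u` and `w` and append `v`. So a partition whose last
vertices are not stable is not minimal; and if they are stable, they form a stable set with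
one vertex per path, whence `π(D) ≤ |P| ≤ α(D)`. -/

open scoped Classical

namespace DigraphPaper

variable {V : Type*} [Fintype V] [DecidableEq V]

section Paths

variable {α : Type*} {A : α → α → Prop}

theorem le_alphaNum [Finite α] {S : Finset α} (hS : DStable A (S : Set α)) :
    S.card ≤ alphaNum A := by
  have := Fintype.ofFinite α
  exact le_csSup ⟨Fintype.card α, by rintro n ⟨T, -, rfl⟩; exact T.card_le_univ⟩ ⟨S, hS, rfl⟩

theorem piNum_le {P : Finset (List α)} (hP : IsPathPartition A P) : piNum A ≤ P.card :=
  Nat.sInf_le ⟨P, hP, rfl⟩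

theorem isPath_append_singleton_iff {p : List α} {v : α} :
    IsPath A (p ++ [v]) ↔
      p.Nodup ∧ p.IsChain A ∧ v ∉ p ∧ ∀ x ∈ p.getLast?, A x v := by
  -- `List.Chain'` unfolds to `List.IsChain`, for which the simp lemmas are stated
  change p ++ [v] ≠ [] ∧ (p ++ [v]).Nodup ∧ (p ++ [v]).IsChain A ↔ _
  simp only [ne_eq, List.append_eq_nil_iff, List.cons_ne_self, and_false,
    not_false_eq_true, List.nodup_append, List.nodup_cons, List.not_mem_nil, List.nodup_nil,
    and_self, List.mem_cons, or_false, forall_eq, true_and, List.isChain_append,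
    List.IsChain.singleton, Option.mem_def, List.head?_cons, Option.some.injEq, forall_eq']
  constructor
  · rintro ⟨⟨hnd, hv⟩, hc, hlast⟩
    exact ⟨hnd, hc, fun h => hv v h rfl, hlast⟩
  · rintro ⟨hnd, hc, hv, hlast⟩
    exact ⟨⟨hnd, fun a ha hav => hv (hav ▸ ha)⟩, hc, hlast⟩

theorem IsPath.append_singleton {p : List α} {x v : α} (hp : IsPath A p)
    (hx : p.getLast? = some x) (hxv : A x v) (hv : v ∉ p) : IsPath A (p ++ [v]) :=
  isPath_append_singleton_iff.2 ⟨hp.2.1, hp.2.2, hv, by simpa [hx] using hxv⟩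

theorem InSemicomplete.exists_path_perm (hin : InSemicomplete A) (p q : List α) {u v : α}
    (hp : IsPath A (p ++ [u])) (hq : IsPath A (q ++ [v]))
    (hdisj : (p ++ [u]).Disjoint (q ++ [v])) (huv : A u v) :
    ∃ m, IsPath A m ∧ m.Perm (p ++ [u] ++ (q ++ [v])) ∧ m.getLast? = some v := by
  obtain ⟨hqnd, hqc, hvq, hlast⟩ := isPath_append_singleton_iff.1 hq
  have hvp : v ∉ p ++ [u] := fun h => hdisj h (by simp)
  rcases q.eq_nil_or_concat' with rfl | ⟨q, w, rfl⟩
  · refine ⟨p ++ [u] ++ [v], hp.append_singleton (by simp) huv hvp, by simp, by simp⟩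
  have hwv : A w v := hlast w (by simp)
  have hq' : IsPath A (q ++ [w]) := ⟨by simp, hqnd, hqc⟩
  have hne : u ≠ w := fun h => hdisj (by simp : u ∈ p ++ [u]) (by simp [h])
  have hv' : v ∉ p ++ [u] ++ (q ++ [w]) := by simp_all
  rcases hin v u w huv hwv hne with huw | hwu
  · obtain ⟨m, hm, hperm, hmlast⟩ := hin.exists_path_perm p q hp hq'
      (fun x hx hxq => hdisj hx (List.mem_append_left _ hxq)) huw
    refine ⟨m ++ [v], hm.append_singleton hmlast hwv (hperm.mem_iff.not.2 hv'), ?_, by simp⟩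
    simpa using hperm.append_right [v]
  · obtain ⟨m, hm, hperm, hmlast⟩ := hin.exists_path_perm q p hq' hp
      (fun x hxq hx => hdisj hx (List.mem_append_left _ hxq)) hwu
    refine ⟨m ++ [v], hm.append_singleton hmlast huv ?_, ?_, by simp⟩
    · exact (hperm.trans List.perm_append_comm).mem_iff.not.2 hv'
    · simpa using (hperm.trans List.perm_append_comm).append_right [v]
termination_by p.length + q.length

theorem IsPathPartition.merge {P : Finset (List α)} (hP : IsPathPartition A P)
    {p q m : List α} (hp : p ∈ P) (hq : q ∈ P) (hm : IsPath A m)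
    (hmem : ∀ x, x ∈ m ↔ x ∈ p ∨ x ∈ q) :
    IsPathPartition A (insert m (P \ {p, q})) := by
  obtain ⟨hpaths, hdisj, hcover⟩ := hP
  have hm_disj : ∀ r ∈ P \ {p, q}, ∀ x ∈ m, x ∉ r := by
    intro r hr x hx hxr
    simp only [Finset.mem_sdiff, Finset.mem_insert, Finset.mem_singleton, not_or] at hr
    rcases (hmem x).1 hx with h | h
    · exact hdisj p hp r hr.1 (Ne.symm hr.2.1) x h hxr
    · exact hdisj q hq r hr.1 (Ne.symm hr.2.2) x h hxr
  refine ⟨?_, ?_, ?_⟩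
  · simp only [Finset.mem_insert, Finset.mem_sdiff]
    rintro r (rfl | ⟨hr, -⟩)
    exacts [hm, hpaths r hr]
  · simp only [PDisjoint, Finset.mem_insert]
    rintro r (rfl | hr) s (rfl | hs) hrs x hxr hxs
    · exact hrs rfl
    · exact hm_disj s hs x hxr hxs
    · exact hm_disj r hr x hxs hxr
    · exact hdisj r (Finset.mem_sdiff.1 hr).1 s (Finset.mem_sdiff.1 hs).1 hrs x hxr hxs
  · intro x
    obtain ⟨r, hr, hxr⟩ := hcover x
    by_cases hrpq : r = p ∨ r = q
    · refine ⟨m, Finset.mem_insert_self _ _, (hmem x).2 ?_⟩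
      rcases hrpq with rfl | rfl <;> simp [hxr]
    · exact ⟨r, Finset.mem_insert_of_mem (by simpa [hr] using hrpq), hxr⟩

theorem IsPathPartition.exists_card_lt_of_arc (hin : InSemicomplete A)
    {P : Finset (List α)} (hP : IsPathPartition A P) {u v : α} (hu : u ∈ pends P)
    (hv : v ∈ pends P) (hne : u ≠ v) (huv : A u v) :
    ∃ Q : Finset (List α), IsPathPartition A Q ∧ Q.card < P.card := by
  obtain ⟨p, hpP, hpu⟩ := hu
  obtain ⟨q, hqP, hqv⟩ := hv
  have hpq : p ≠ q := by
    rintro rfl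
    exact hne (Option.some.inj (hpu.symm.trans hqv))
  obtain ⟨p', rfl⟩ := List.getLast?_eq_some_iff.1 hpu
  obtain ⟨q', rfl⟩ := List.getLast?_eq_some_iff.1 hqv
  obtain ⟨m, hm, hperm, -⟩ := hin.exists_path_perm p' q' (hP.1 _ hpP) (hP.1 _ hqP)
    (fun x hxp hxq => hP.2.1 _ hpP _ hqP hpq x hxp hxq) huv
  refine ⟨_, hP.merge hpP hqP hm (fun x => by simp [hperm.mem_iff, or_assoc]), ?_⟩
  have hsub : {p' ++ [u], q' ++ [v]} ⊆ P := Finset.insert_subset hpP (by simpa using hqP)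
  have htwo := Finset.card_le_card hsub
  rw [Finset.card_pair hpq] at htwo
  calc (insert m (P \ {p' ++ [u], q' ++ [v]})).card
      ≤ (P \ {p' ++ [u], q' ++ [v]}).card + 1 := Finset.card_insert_le _ _
    _ < P.card := by rw [Finset.card_sdiff_of_subset hsub, Finset.card_pair hpq]; omega

theorem IsPathPartition.exists_card_lt_of_not_stable (hin : InSemicomplete A)
    {P : Finset (List α)} (hP : IsPathPartition A P) (hS : ¬ DStable A (pends P)) :
    ∃ Q : Finset (List α), IsPathPartition A Q ∧ Q.card < P.card := by
  simp only [DStable, DAdj, not_forall, not_not] at hS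
  obtain ⟨u, hu, v, hv, hne, huv | hvu⟩ := hS
  exacts [hP.exists_card_lt_of_arc hin hu hv hne huv,
    hP.exists_card_lt_of_arc hin hv hu (Ne.symm hne) hvu]

theorem IsPathPartition.card_le_alphaNum [Finite α] {P : Finset (List α)}
    (hP : IsPathPartition A P) (hS : DStable A (pends P)) :
    P.card ≤ alphaNum A := by
  let S := P.biUnion fun p => p.getLast?.toFinset
  have hSP : (S : Set α) = pends P := by ext; simp [S, pends]
  have hcard : S.card = P.card := by
    rw [Finset.card_biUnion, Finset.card_eq_sum_ones]
    · refine Finset.sum_congr rfl fun p hp => ?_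
      simp [List.getLast?_eq_getLast_of_ne_nil (hP.1 p hp).1]
    · intro p hp q hq hpq
      simp only [Function.onFun, Finset.disjoint_left, Option.mem_toFinset]
      intro x hxp hxq
      exact hP.2.1 p hp q hq hpq x (List.mem_of_getLast? hxp) (List.mem_of_getLast? hxq)
  exact hcard ▸ le_alphaNum (hSP ▸ hS)

end Paths

theorem stmt11_general (A : V → V → Prop)
    (hin : InSemicomplete A) :
    (∀ P : Finset (List V), IsPathPartition A P → DStable A (pends P) →
      piNum A ≤ P.card) ∧
    (∀ P : Finset (List V), IsPathPartition A P →
      (¬ DStable A (pends P) ∧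
        ∃ Q : Finset (List V), IsPathPartition A Q ∧ Q.card < P.card) ∨
      (DStable A (pends P) ∧ piNum A ≤ alphaNum A)) := by
  refine ⟨fun P hP _ => piNum_le hP, fun P hP => ?_⟩
  by_cases hS : DStable A (pends P)
  · exact Or.inr ⟨hS, (piNum_le hP).trans (hP.card_le_alphaNum hS)⟩
  · exact Or.inl ⟨hS, hP.exists_card_lt_of_not_stable hin hS⟩

/-- In an in-semicomplete digraph, a path partition with stable endpoint set
witnesses π(D) ≤ |P|; and every path partition either has non-stable
endpoints and can be replaced by a smaller partition, or has stable
endpoints witnessing π(D) ≤ α(D). -/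
theorem stmt11 (A : V → V → Prop) (hirr : Irreflexive A)
    (hin : InSemicomplete A) :
    (∀ P : Finset (List V), IsPathPartition A P → DStable A (pends P) →
      piNum A ≤ P.card) ∧
    (∀ P : Finset (List V), IsPathPartition A P →
      (¬ DStable A (pends P) ∧
        ∃ Q : Finset (List V), IsPathPartition A Q ∧ Q.card < P.card) ∨
      (DStable A (pends P) ∧ piNum A ≤ alphaNum A)) :=
  stmt11_general A hin

end DigraphPaper
end

section
/- For every in-semicomplete digraph D and every positive integer k, π_k(D) ≤ α_k(D) (Linial's Conjecture holds for in-semicomplete digraphs). -/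
open scoped Classical

namespace DigraphPaper

variable {V : Type*} [Fintype V] [DecidableEq V]

/-!
Choose a path partition `P` minimising `∑ p ∈ P, potential k |p|`, where
`potential k m = ∑_{ℓ=1}^{k} min m ℓ`, and for `j < k` let the `j`-th class consist of the `j`-th
last vertices of the paths of `P`. These classes are disjoint and their sizes add up to the
k-norm of `P`. If an arc `u → v` joined two vertices of one class, lying on paths `p ≠ q`, cut `p`
right after `u` and insert its initial part into `q` vertex by vertex, from `u` backwards: in an
in-semicomplete digraph a vertex with an out-neighbour on a path can be inserted into the path,
because it and the predecessor of its first out-neighbour are both in-neighbours of that vertex.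
The lengths `|p|, |q|` become `|p| + |q| - j, j`; as every `min · ℓ` is concave, and strictly so
around `ℓ = j + 1`, the potential drops. Hence every class is stable and `π_k ≤ ‖P‖_k ≤ α_k`.
-/

theorem _root_.List.exists_eq_append_cons_of_getElem?_reverse {α : Type*} {l : List α} {j : ℕ}
    {u : α} (h : l.reverse[j]? = some u) : ∃ s t, l = s ++ u :: t ∧ t.length = j := by
  obtain ⟨hj, rfl⟩ := List.getElem?_eq_some_iff.1 h
  refine ⟨(l.reverse.drop (j + 1)).reverse, (l.reverse.take j).reverse, ?_, by simp at hj ⊢; omega⟩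
  conv_lhs => rw [← List.reverse_reverse l, ← List.take_append_drop j l.reverse,
    List.drop_eq_getElem_cons hj]
  simp

def potential (k m : ℕ) : ℕ := ∑ ℓ ∈ Finset.range k, min m (ℓ + 1)

theorem potential_zero (k : ℕ) : potential k 0 = 0 := by simp [potential]

theorem potential_add_lt {k a b j : ℕ} (hjb : j < b) (hjk : j < k) :
    potential k (a + (b + 1)) + potential k j < potential k (a + (j + 1)) + potential k b := by
  unfold potential
  rw [← Finset.sum_add_distrib, ← Finset.sum_add_distrib]
  exact Finset.sum_lt_sum (fun ℓ _ => by omega) ⟨j, Finset.mem_range.2 hjk, by omega⟩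

section

omit [Fintype V] [DecidableEq V]

variable {A : V → V → Prop}

theorem InSemicomplete.exists_isChain_perm_cons (hin : InSemicomplete A) {v : V} {q : List V}
    (hq : q.IsChain A) (hvq : v ∉ q) (hvx : ∃ x ∈ q, A v x) :
    ∃ r : List V, r.IsChain A ∧ r.Perm (v :: q) ∧ (r.head? = q.head? ∨ r = v :: q) := by
  induction q with
  | nil => simp at hvx
  | cons z q ih =>
    by_cases hvz : A v z
    · exact ⟨v :: z :: q, hq.cons_cons hvz, .refl _, .inr rfl⟩
    obtain ⟨x, hx, hvx⟩ := hvx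
    have hxq : x ∈ q := (List.mem_cons.1 hx).resolve_left (by rintro rfl; exact hvz hvx)
    obtain ⟨r, hr, hperm, hhead | rfl⟩ :=
      ih hq.tail (fun h => hvq (List.mem_cons_of_mem z h)) ⟨x, hxq, hvx⟩
    · refine ⟨z :: r, hr.cons fun y hy => ?_, (hperm.cons z).trans (.swap v z q), .inl rfl⟩
      exact (List.isChain_cons.1 hq).1 y (hhead ▸ hy)
    · obtain ⟨w, q, rfl⟩ := List.exists_cons_of_ne_nil (List.ne_nil_of_mem hxq)
      have hvw : A v w := (List.isChain_cons_cons.1 hr).1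
      have hzw : A z w := (List.isChain_cons_cons.1 hq).1
      have hzv : A z v :=
        (hin w v z hvw hzw fun h => hvq (h ▸ List.mem_cons_self)).resolve_left hvz
      exact ⟨z :: v :: w :: q, hr.cons_cons hzv, .swap v z _, .inl rfl⟩

theorem InSemicomplete.exists_isChain_perm_append (hin : InSemicomplete A) {h q : List V} {u x : V}
    (hh : h.IsChain A) (hq : q.IsChain A) (hnd : (h ++ q).Nodup) (hu : h.getLast? = some u)
    (hx : x ∈ q) (hux : A u x) : ∃ m : List V, m.IsChain A ∧ m.Perm (h ++ q) := by
  induction h using List.reverseRecOn generalizing q u x with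
  | nil => simp at hu
  | append_singleton h w ih =>
    obtain rfl : w = u := by simpa using hu
    have hwq : w ∉ q := fun hw => (List.nodup_append.1 hnd).2.2 w (by simp) w hw rfl
    obtain ⟨r, hr, hperm, -⟩ := hin.exists_isChain_perm_cons hq hwq ⟨x, hx, hux⟩
    have hperm' : (h ++ r).Perm (h ++ [w] ++ q) := by simpa using hperm.append_left h
    cases hlast : h.getLast? with
    | none => exact ⟨r, hr, by simpa [List.getLast?_eq_none_iff.1 hlast] using hperm⟩
    | some u' =>
      have hu'w : A u' w := (List.isChain_append.1 hh).2.2 u' hlast w rfl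
      obtain ⟨m, hm, hmperm⟩ := ih hh.left_of_append hr (hperm'.nodup_iff.2 hnd) hlast
        (hperm.mem_iff.2 List.mem_cons_self) hu'w
      exact ⟨m, hm, hmperm.trans hperm'⟩

theorem IsPathPartition.nodup_append {P : Finset (List V)} (hP : IsPathPartition A P) {p q : List V}
    (hp : p ∈ P) (hq : q ∈ P) (hpq : p ≠ q) : (p ++ q).Nodup :=
  List.nodup_append.2 ⟨(hP.1 p hp).2.1, (hP.1 q hq).2.1,
    fun x hx _ hy hxy => hP.2.1 p hp q hq hpq x hx (hxy ▸ hy)⟩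

end

section

omit [Fintype V]

variable {A : V → V → Prop}

theorem IsPathPartition.sdiff_union {P R S : Finset (List V)} (hP : IsPathPartition A P)
    (hRP : R ⊆ P) (hS : ∀ s ∈ S, IsPath A s) (hSdisj : PDisjoint S)
    (hcov : ∀ x, (∃ s ∈ S, x ∈ s) ↔ ∃ r ∈ R, x ∈ r) :
    IsPathPartition A (P \ R ∪ S) ∧ Disjoint (P \ R) S := by
  obtain ⟨hpaths, hdisj, hcover⟩ := hP
  have hout : ∀ s ∈ S, ∀ r ∈ P \ R, ∀ x ∈ s, x ∉ r := by
    intro s hs r hr x hxs hxr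
    obtain ⟨r', hr', hxr'⟩ := (hcov x).1 ⟨s, hs, hxs⟩
    rw [Finset.mem_sdiff] at hr
    exact hdisj r hr.1 r' (hRP hr') (by rintro rfl; exact hr.2 hr') x hxr hxr'
  refine ⟨⟨fun r hr => ?_, fun r hr r' hr' hne x hx hx' => ?_, fun x => ?_⟩, ?_⟩
  · rcases Finset.mem_union.1 hr with hr | hr
    exacts [hpaths r (Finset.mem_sdiff.1 hr).1, hS r hr]
  · rcases Finset.mem_union.1 hr with hr | hr <;> rcases Finset.mem_union.1 hr' with hr' | hr'
    · exact hdisj r (Finset.mem_sdiff.1 hr).1 r' (Finset.mem_sdiff.1 hr').1 hne x hx hx'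
    · exact hout r' hr' r hr x hx' hx
    · exact hout r hr r' hr' x hx hx'
    · exact hSdisj r hr r' hr' hne x hx hx'
  · obtain ⟨r, hr, hxr⟩ := hcover x
    by_cases hrR : r ∈ R
    · obtain ⟨s, hs, hxs⟩ := (hcov x).2 ⟨r, hrR, hxr⟩
      exact ⟨s, Finset.mem_union_right _ hs, hxs⟩
    · exact ⟨r, Finset.mem_union_left _ (Finset.mem_sdiff.2 ⟨hr, hrR⟩), hxr⟩
  · refine Finset.disjoint_right.2 fun s hs hsPR => ?_
    obtain ⟨x, hx⟩ := List.exists_mem_of_ne_nil s (hS s hs).1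
    exact hout s hs s hsPR x hx hx

theorem IsPathPartition.exists_replace_pair {P : Finset (List V)} (hP : IsPathPartition A P)
    {p q m t : List V} (hp : p ∈ P) (hq : q ∈ P) (hpq : p ≠ q) (hm : m.IsChain A) (hmne : m ≠ [])
    (ht : t.IsChain A) (hperm : (m ++ t).Perm (p ++ q)) (f : ℕ → ℕ) (hf : f 0 = 0) :
    ∃ Q, IsPathPartition A Q ∧
      ∑ r ∈ Q, f r.length + f p.length + f q.length =
        ∑ r ∈ P, f r.length + f m.length + f t.length := by
  have hnd : (m ++ t).Nodup := hperm.nodup_iff.2 (hP.nodup_append hp hq hpq)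
  have hmt : m ≠ t := by
    rintro rfl
    obtain ⟨x, hx⟩ := List.exists_mem_of_ne_nil m hmne
    exact (List.nodup_append.1 hnd).2.2 x hx x hx rfl
  set S : Finset (List V) := ({m, t} : Finset (List V)).erase []
  have hSdisj : PDisjoint S := by
    intro r hr r' hr' hne x hx hx'
    simp only [S, Finset.mem_erase, Finset.mem_insert, Finset.mem_singleton] at hr hr'
    rcases hr.2 with rfl | rfl <;> rcases hr'.2 with rfl | rfl
    · exact hne rfl
    · exact (List.nodup_append.1 hnd).2.2 x hx x hx' rfl
    · exact (List.nodup_append.1 hnd).2.2 x hx' x hx rfl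
    · exact hne rfl
  have hS : ∀ s ∈ S, IsPath A s := by
    intro s hs
    simp only [S, Finset.mem_erase, Finset.mem_insert, Finset.mem_singleton] at hs
    rcases hs with ⟨hs, rfl | rfl⟩
    exacts [⟨hs, (List.nodup_append.1 hnd).1, hm⟩, ⟨hs, (List.nodup_append.1 hnd).2.1, ht⟩]
  have hcov : ∀ x, (∃ s ∈ S, x ∈ s) ↔ ∃ r ∈ ({p, q} : Finset (List V)), x ∈ r := by
    intro x
    have := hperm.mem_iff (a := x)
    simp only [List.mem_append] at this
    aesop
  have hRP : {p, q} ⊆ P := Finset.insert_subset hp (Finset.singleton_subset_iff.2 hq)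
  obtain ⟨hQ, hdisj⟩ := hP.sdiff_union hRP hS hSdisj hcov
  refine ⟨_, hQ, ?_⟩
  have hsumS : ∑ r ∈ S, f r.length = f m.length + f t.length := by
    rw [Finset.sum_erase _ (by simpa using hf), Finset.sum_pair hmt]
  rw [Finset.sum_union hdisj, hsumS, ← Finset.sum_sdiff hRP, Finset.sum_pair hpq]
  ring

theorem IsPathPartition.exists_potential_lt (hin : InSemicomplete A) {P : Finset (List V)}
    (hP : IsPathPartition A P) {p q : List V} (hp : p ∈ P) (hq : q ∈ P) (hpq : p ≠ q) {j k : ℕ}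
    (hjk : j < k) {u v : V} (hu : p.reverse[j]? = some u) (hv : q.reverse[j]? = some v)
    (huv : A u v) :
    ∃ Q, IsPathPartition A Q ∧ ∑ r ∈ Q, potential k r.length < ∑ r ∈ P, potential k r.length := by
  obtain ⟨s, t, rfl, rfl⟩ := List.exists_eq_append_cons_of_getElem?_reverse hu
  have hjq : t.length < q.length := by simpa using (List.getElem?_eq_some_iff.1 hv).1
  have hvq : v ∈ q := List.mem_reverse.1 (List.mem_of_getElem? hv)
  have hnd := hP.nodup_append hp hq hpq
  have hpc : (s ++ [u] ++ t).IsChain A := by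
    rw [List.append_assoc, List.singleton_append]; exact (hP.1 _ hp).2.2
  -- cut `p` after `u` and merge the head `s ++ [u]` into `q` through the arc `u → v`
  obtain ⟨m, hm, hmperm⟩ := hin.exists_isChain_perm_append hpc.left_of_append (hP.1 _ hq).2.2
    (hnd.sublist (by simp)) (by simp) hvq huv
  have hperm : (m ++ t).Perm (s ++ u :: t ++ q) := by
    refine (hmperm.append_right t).trans ?_
    simpa using List.perm_append_comm.append_left (s ++ [u])
  obtain ⟨Q, hQ, hsum⟩ := hP.exists_replace_pair hp hq hpq hm
    (List.ne_nil_of_length_pos (by simp [hmperm.length_eq])) hpc.right_of_append hperm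
    (potential k) (potential_zero k)
  refine ⟨Q, hQ, ?_⟩
  have hlt := potential_add_lt (a := s.length) hjq hjk
  have hmlen : m.length = s.length + (q.length + 1) := by simp [hmperm.length_eq]
  rw [hmlen, List.length_append, List.length_cons] at hsum
  omega

def endLayer (P : Finset (List V)) (j : ℕ) : Finset V :=
  P.biUnion fun p => (p.reverse[j]?).toFinset

theorem mem_endLayer {P : Finset (List V)} {j : ℕ} {x : V} :
    x ∈ endLayer P j ↔ ∃ p ∈ P, p.reverse[j]? = some x := by
  simp [endLayer]

theorem card_endLayer {P : Finset (List V)} (hP : PDisjoint P) (j : ℕ) :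
    (endLayer P j).card = (P.filter fun p => j < p.length).card := by
  rw [endLayer, Finset.card_biUnion, Finset.card_filter]
  · refine Finset.sum_congr rfl fun p _ => ?_
    by_cases hj : j < p.length
    · rw [List.getElem?_eq_getElem (by simpa using hj)]
      simp [hj]
    · rw [List.getElem?_eq_none (by simpa using hj)]
      simp [hj]
  · intro p hp q hq hpq
    refine Finset.disjoint_left.2 fun x hxp hxq => ?_
    simp only [Option.mem_toFinset, Option.mem_def] at hxp hxq
    exact hP p hp q hq hpq x (List.mem_reverse.1 (List.mem_of_getElem? hxp))
      (List.mem_reverse.1 (List.mem_of_getElem? hxq))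

theorem sum_card_endLayer {P : Finset (List V)} (hP : PDisjoint P) (k : ℕ) :
    ∑ i : Fin k, (endLayer P i).card = knorm k P := by
  simp only [card_endLayer hP, Finset.card_filter]
  rw [Finset.sum_comm]
  refine Finset.sum_congr rfl fun p _ => ?_
  rw [← Finset.card_filter, Fin.card_filter_val_lt, min_comm]

theorem disjoint_endLayer {P : Finset (List V)} (hP : IsPathPartition A P) {i j : ℕ} (hij : i ≠ j) :
    Disjoint (endLayer P i) (endLayer P j) := by
  refine Finset.disjoint_left.2 fun x hxi hxj => ?_
  obtain ⟨p, hp, hpx⟩ := mem_endLayer.1 hxi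
  obtain ⟨q, hq, hqx⟩ := mem_endLayer.1 hxj
  obtain rfl : p = q := by
    by_contra hpq
    exact hP.2.1 p hp q hq hpq x (List.mem_reverse.1 (List.mem_of_getElem? hpx))
      (List.mem_reverse.1 (List.mem_of_getElem? hqx))
  have hi : i < p.reverse.length := (List.getElem?_eq_some_iff.1 hpx).1
  exact hij ((List.getElem?_inj hi (List.nodup_reverse.2 (hP.1 p hp).2.1)).1 (hpx.trans hqx.symm))

theorem dStable_endLayer (hin : InSemicomplete A) {P : Finset (List V)} (hP : IsPathPartition A P)
    {k : ℕ} (hmin : ∀ Q, IsPathPartition A Q →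
      ∑ r ∈ P, potential k r.length ≤ ∑ r ∈ Q, potential k r.length)
    {j : ℕ} (hjk : j < k) : DStable A (endLayer P j) := by
  have hnoarc : ∀ u ∈ endLayer P j, ∀ v ∈ endLayer P j, u ≠ v → ¬ A u v := by
    intro u hu v hv huv harc
    obtain ⟨p, hp, hpu⟩ := mem_endLayer.1 hu
    obtain ⟨q, hq, hqv⟩ := mem_endLayer.1 hv
    have hpq : p ≠ q := by
      rintro rfl
      exact huv (Option.some.inj (hpu.symm.trans hqv))
    obtain ⟨Q, hQ, hlt⟩ := hP.exists_potential_lt hin hp hq hpq hjk hpu hqv harc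
    exact (hmin Q hQ).not_gt hlt
  intro u hu v hv huv hadj
  exact hadj.elim (hnoarc u hu v hv huv) (hnoarc v hv u hu huv.symm)

end

theorem exists_isPathPartition_forall_le (A : V → V → Prop) (f : Finset (List V) → ℕ) :
    ∃ P, IsPathPartition A P ∧ ∀ Q, IsPathPartition A Q → f P ≤ f Q := by
  have hsingletons : IsPathPartition A (Finset.univ.image fun v : V => [v]) := by
    refine ⟨?_, ?_, fun v => ⟨[v], Finset.mem_image_of_mem _ (Finset.mem_univ v), by simp⟩⟩
    · intro p hp
      obtain ⟨v, -, rfl⟩ := Finset.mem_image.1 hp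
      exact ⟨List.cons_ne_nil v [], List.nodup_singleton v, List.IsChain.singleton v⟩
    · simp [PDisjoint]
  obtain ⟨P, hP, hmin⟩ := (measure f).wf.has_min {P | IsPathPartition A P} ⟨_, hsingletons⟩
  exact ⟨P, hP, fun Q hQ => not_lt.1 (hmin Q hQ)⟩

omit [DecidableEq V] in
theorem le_alphak {A : V → V → Prop} {k : ℕ} {C : Fin k → Finset V}
    (hC : IsPartialKColoring A k C) : ∑ i, (C i).card ≤ alphak A k := by
  refine le_csSup ⟨k * Fintype.card V, ?_⟩ ⟨C, hC, rfl⟩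
  rintro n ⟨C', -, rfl⟩
  calc ∑ i, (C' i).card ≤ ∑ _i : Fin k, Fintype.card V :=
        Finset.sum_le_sum fun i _ => Finset.card_le_univ _
    _ = k * Fintype.card V := by simp

theorem stmt18_general (A : V → V → Prop)
    (hin : InSemicomplete A) (k : ℕ) :
    pik A k ≤ alphak A k := by
  obtain ⟨P, hP, hmin⟩ := exists_isPathPartition_forall_le A fun P => ∑ r ∈ P, potential k r.length
  have hC : IsPartialKColoring A k fun i => endLayer P i :=
    ⟨fun i => dStable_endLayer hin hP hmin i.2,
      fun i j hij => disjoint_endLayer hP (Fin.val_injective.ne hij)⟩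
  calc pik A k ≤ knorm k P := Nat.sInf_le ⟨P, hP, rfl⟩
    _ = ∑ i : Fin k, (endLayer P i).card := (sum_card_endLayer hP.2.1 k).symm
    _ ≤ alphak A k := le_alphak hC

/-- Linial's Conjecture for in-semicomplete digraphs: π_k(D) ≤ α_k(D). -/
theorem stmt18 (A : V → V → Prop) (hirr : Irreflexive A)
    (hin : InSemicomplete A) (k : ℕ) (hk : 0 < k) :
    pik A k ≤ alphak A k :=
  stmt18_general A hin k

end DigraphPaper
end
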